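/- arXiv:1407.6258 — 7 statements merged into one kernel-verified Lean document; each statement's English description precedes it below -/
import Mathlib

section
/- Let P be a finite ranked poset, let m ≥ 1 and let 1 ≤ i ≤ m. Then substituting q_i := 0 in N_P^(m) yields the polynomial N_P^(m−1)(p₁,…,p_{i−1}, p_i+p_{i+1}, p_{i+2},…,p_{m+1}; q₁,…,q_{i−1}, q_{i+1},…,q_m), i.e. the polynomial obtained from N_P^(m−1) by substituting p_i + p_{i+1} for its i-th p-variable, p_{j+1} for its j-th p-variable when j > i, and q_{j+1} for its j-th q-variable when j ≥ i. -/
open MvPolynomial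
open scoped Classical

noncomputable section

/-- The order condition for a function `r : α → Fin N` (labels `0,…,N-1` standing for
`1,…,N`) with respect to a rank function `ht` on the poset `α`. -/
def OrderCond {α : Type} [PartialOrder α] (ht : α → ℕ) {N : ℕ} (r : α → Fin N) : Prop :=
  (∀ x y : α, x ≤ y → r x ≤ r y) ∧ ∀ x y : α, x < y → Odd (ht x) → r x < r y

/-- `ht` is a rank function on the poset `α`: minimal elements have height `0` and
covering relations increase the height by exactly one. -/
def IsRanked {α : Type} [PartialOrder α] (ht : α → ℕ) : Prop :=
  (∀ x : α, IsMin x → ht x = 0) ∧ ∀ x y : α, x ⋖ y → ht y = ht x + 1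

/-- The polynomial `N_P^(m)`, an element of `ℚ[p₁,…,p_{m+1},q₁,…,q_m]`;
the variable `Sum.inl j` is `p_{j+1}` and `Sum.inr j` is `q_{j+1}` (0-indexed). -/
def NP (α : Type) [Fintype α] [PartialOrder α] (ht : α → ℕ) (m : ℕ) :
    MvPolynomial (ℕ ⊕ ℕ) ℚ :=
  ∑ r : α → Fin (m + 1),
    if OrderCond ht r ∧ ∀ v, Odd (ht v) → (r v : ℕ) < m then
      ∏ v : α, if Even (ht v) then X (Sum.inl (r v : ℕ)) else X (Sum.inr (r v : ℕ))
    else 0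

/-- The polynomial `F_P^(N)`, an element of `ℚ[x₁,…,x_N]`; variable `j` is `x_{j+1}`. -/
def FP (α : Type) [Fintype α] [PartialOrder α] (ht : α → ℕ) (N : ℕ) :
    MvPolynomial ℕ ℚ :=
  ∑ r : α → Fin N, if OrderCond ht r then ∏ v : α, X (r v : ℕ) else 0

/-- A stable x-family `(f_{2m+1})_{m ≥ 0}`: `f m` stands for `f_{2m+1} ∈ ℚ[x₁,…,x_{2m+1}]`
(variable `k` is `x_{k+1}`), with `f_{2m+3}(x₁,…,x_{2m+1},0,0) = f_{2m+1}`. -/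
def IsStableX (f : ℕ → MvPolynomial ℕ ℚ) : Prop :=
  (∀ m, (f m).vars ⊆ Finset.range (2 * m + 1)) ∧
  ∀ m, aeval (fun k => if k < 2 * m + 1 then (X k : MvPolynomial ℕ ℚ) else 0) (f (m + 1)) = f m

/-- Equation (E_x): for all (paper) `m ≥ 1` and `1 ≤ i ≤ 2m`, substituting `x_{i+1} := x_i`
in `f_{2m+1}` yields `f_{2m-1}(x₁,…,x_{i-1},x_{i+2},…,x_{2m+1})`.  Here `m, i` are 0-indexed:
`f (m+1)` is `f_{2m+3}` and the Lean variable `i` is the paper variable `i+1`. -/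
def SatisfiesEx (f : ℕ → MvPolynomial ℕ ℚ) : Prop :=
  ∀ m i : ℕ, i < 2 * m + 2 →
    aeval (fun k => if k = i + 1 then (X i : MvPolynomial ℕ ℚ) else X k) (f (m + 1)) =
    aeval (fun k => if k < i then (X k : MvPolynomial ℕ ℚ) else X (k + 2)) (f m)

/-- A stable pq-family `(h_m)_{m ≥ 0}` with `h m ∈ ℚ[p₁,…,p_{m+1},q₁,…,q_m]`
(`Sum.inl j` is `p_{j+1}`, `Sum.inr j` is `q_{j+1}`), such that substituting
`p_{m+2} := 0` and `q_{m+1} := 0` in `h (m+1)` yields `h m`. -/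
def IsStablePQ (h : ℕ → MvPolynomial (ℕ ⊕ ℕ) ℚ) : Prop :=
  (∀ m, (h m).vars ⊆ (Finset.range (m + 1)).image Sum.inl ∪ (Finset.range m).image Sum.inr) ∧
  ∀ m, aeval (Sum.elim
      (fun j => if j = m + 1 then 0 else (X (Sum.inl j) : MvPolynomial (ℕ ⊕ ℕ) ℚ))
      (fun j => if j = m then 0 else X (Sum.inr j))) (h (m + 1)) = h m

/-- Equations (E_pq) for a pq-family; the Lean index `i ≤ m` is the paper index `i+1 ≤ m+1`
and `h (m+1)`, `h m` are the paper `h_m`, `h_{m-1}`.  The first equation sets `q_{i+1} := 0`,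
the second sets `p_{i+1} := 0`. -/
def SatisfiesEpq (h : ℕ → MvPolynomial (ℕ ⊕ ℕ) ℚ) : Prop :=
  ∀ m i : ℕ, i ≤ m →
    (aeval (Sum.elim (fun j => (X (Sum.inl j) : MvPolynomial (ℕ ⊕ ℕ) ℚ))
        (fun j => if j = i then 0 else X (Sum.inr j))) (h (m + 1)) =
      aeval (Sum.elim
        (fun j => if j < i then (X (Sum.inl j) : MvPolynomial (ℕ ⊕ ℕ) ℚ)
          else if j = i then X (Sum.inl i) + X (Sum.inl (i + 1)) else X (Sum.inl (j + 1)))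
        (fun j => if j < i then X (Sum.inr j) else X (Sum.inr (j + 1)))) (h m)) ∧
    (aeval (Sum.elim (fun j => if j = i then 0 else (X (Sum.inl j) : MvPolynomial (ℕ ⊕ ℕ) ℚ))
        (fun j => X (Sum.inr j))) (h (m + 1)) =
      aeval (Sum.elim
        (fun j => if j < i then (X (Sum.inl j) : MvPolynomial (ℕ ⊕ ℕ) ℚ)
          else X (Sum.inl (j + 1)))
        (fun j => if j + 1 < i then X (Sum.inr j)
          else if j + 1 = i then X (Sum.inr j) + X (Sum.inr (j + 1))
          else X (Sum.inr (j + 1)))) (h m))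

/-- The inverse substitution of (⋆): the x-variable of (0-indexed) Lean index `k`
(paper `x_{k+1}`) expressed in the `p`/`q` variables:
`x_{2i+1} = q_{i+1}+⋯+q_m+p_{i+1}+⋯+p_{m+1}` and `x_{2i} = q_i+⋯+q_m+p_{i+1}+⋯+p_{m+1}`. -/
def xToPQ (m k : ℕ) : MvPolynomial (ℕ ⊕ ℕ) ℚ :=
  if k % 2 = 0 then
    (∑ j ∈ Finset.Ico (k / 2) m, X (Sum.inr j)) + ∑ j ∈ Finset.Ico (k / 2) (m + 1), X (Sum.inl j)
  else
    (∑ j ∈ Finset.Ico (k / 2) m, X (Sum.inr j)) +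
      ∑ j ∈ Finset.Ico (k / 2 + 1) (m + 1), X (Sum.inl j)

/-- The substitution (⋆): `p_i := x_{2i-1} - x_{2i}` (`1 ≤ i ≤ m`),
`q_i := x_{2i} - x_{2i+1}` (`1 ≤ i ≤ m`), `p_{m+1} := x_{2m+1}` (all 0-indexed in Lean). -/
def pqToX (m : ℕ) : ℕ ⊕ ℕ → MvPolynomial ℕ ℚ :=
  Sum.elim (fun j => if j = m then X (2 * m) else X (2 * j) - X (2 * j + 1))
    (fun j => X (2 * j + 1) - X (2 * j + 2))

/-- The substitution sending every odd-indexed (paper) variable `x_{2i+1}` to `0`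
and `x_{2i}` to `y_i` (Lean variable `i-1`). -/
def oddZero : ℕ → MvPolynomial ℕ ℚ := fun k => if k % 2 = 0 then 0 else X (k / 2)

/-- A quasi-symmetric stable family `(g_m)_{m≥0}` with `g m ∈ ℚ[y₁,…,y_m]`
(variable `k` is `y_{k+1}`): `g_{m+1}(y₁,…,y_m,0) = g_m`, and the coefficient of
`y_{a₁}^{c₁}⋯y_{a_r}^{c_r}` (for `a₁ < ⋯ < a_r ≤ m`, `c_j > 0`) equals the coefficient
of `y₁^{c₁}⋯y_r^{c_r}`. -/
def IsQSymStable (g : ℕ → MvPolynomial ℕ ℚ) : Prop :=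
  (∀ m, (g m).vars ⊆ Finset.range m) ∧
  (∀ m, aeval (fun k => if k = m then 0 else (X k : MvPolynomial ℕ ℚ)) (g (m + 1)) = g m) ∧
  ∀ (m r : ℕ) (a c : Fin r → ℕ), StrictMono a → (∀ j, a j < m) → (∀ j, 0 < c j) →
    coeff (∑ j, Finsupp.single (a j) (c j)) (g m) =
    coeff (∑ j : Fin r, Finsupp.single (j : ℕ) (c j)) (g m)

/-! ### Auxiliary machinery for `stmt0` -/

/-- The "down" map collapsing `i` and `i+1`. -/
def dn (i j : ℕ) : ℕ := if j ≤ i then j else j - 1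

/-- The projection of a colouring `r : α → Fin (n+2)` to `α → Fin (n+1)`. -/
def sg {α : Type} (i n : ℕ) (hi : i ≤ n) (r : α → Fin (n + 2)) : α → Fin (n + 1) :=
  fun v => ⟨dn i (r v), by have := (r v).2; simp only [dn]; split <;> omega⟩

/-- The monomial attached to a colouring. -/
def Mon {α : Type} [Fintype α] (ht : α → ℕ) {N : ℕ} (r : α → Fin N) :
    MvPolynomial (ℕ ⊕ ℕ) ℚ :=
  ∏ v, if Even (ht v) then X (Sum.inl (r v : ℕ)) else X (Sum.inr (r v : ℕ))

lemma sum_single_fiber {N a : ℕ} (ha : a < N) (P : ℕ → Prop) [DecidablePred P]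
    (hP : ∀ j < N, (P j ↔ j = a)) (f : ℕ → MvPolynomial (ℕ ⊕ ℕ) ℚ) :
    (∑ j : Fin N, if P (j : ℕ) then f (j : ℕ) else 0) = f a := by
  rw [Finset.sum_eq_single (⟨a, ha⟩ : Fin N)]
  · rw [if_pos ((hP a ha).mpr rfl)]
  · intro j _ hj
    rw [if_neg]
    intro h
    exact hj (Fin.ext ((hP j j.2).mp h))
  · simp

lemma sum_double_fiber {N a b : ℕ} (ha : a < N) (hb : b < N) (hab : a ≠ b) (P : ℕ → Prop) [DecidablePred P]
    (hP : ∀ j < N, (P j ↔ j = a ∨ j = b)) (f : ℕ → MvPolynomial (ℕ ⊕ ℕ) ℚ) :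
    (∑ j : Fin N, if P (j : ℕ) then f (j : ℕ) else 0) = f a + f b := by
  have step : ∀ j : Fin N, (if P (j : ℕ) then f (j : ℕ) else 0) =
      (if (j : ℕ) = a then f (j : ℕ) else 0) + (if (j : ℕ) = b then f (j : ℕ) else 0) := by
    intro j
    by_cases h : P (j : ℕ)
    · rcases (hP j j.2).mp h with h' | h'
      · rw [if_pos h, if_pos h', if_neg (by omega), add_zero]
      · rw [if_pos h, if_neg (by omega), if_pos h', zero_add]
    · have h2 := (hP j j.2)
      rw [if_neg h, if_neg (fun ha' => h (h2.mpr (Or.inl ha'))),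
        if_neg (fun hb' => h (h2.mpr (Or.inr hb'))), add_zero]
  rw [Finset.sum_congr rfl fun j _ => step j, Finset.sum_add_distrib]
  congr 1
  · exact sum_single_fiber ha (fun j => j = a) (fun j _ => Iff.rfl) f
  · exact sum_single_fiber hb (fun j => j = b) (fun j _ => Iff.rfl) f

/-- Per-vertex expansion of the substituted factor. -/
lemma factor_expand (i n : ℕ) (hi : i ≤ n) (hv : ℕ) (k : Fin (n + 1)) :
    (if Even hv then
        (if (k : ℕ) < i then (X (Sum.inl (k : ℕ)) : MvPolynomial (ℕ ⊕ ℕ) ℚ)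
          else if (k : ℕ) = i then X (Sum.inl i) + X (Sum.inl (i + 1))
          else X (Sum.inl ((k : ℕ) + 1)))
      else (if (k : ℕ) < i then X (Sum.inr (k : ℕ)) else X (Sum.inr ((k : ℕ) + 1)))) =
    ∑ j : Fin (n + 2),
      if dn i (j : ℕ) = (k : ℕ) ∧ (Odd hv → (j : ℕ) ≠ i) then
        (if Even hv then X (Sum.inl (j : ℕ)) else X (Sum.inr (j : ℕ))) else 0 := by
  have hk := k.2
  by_cases he : Even hv
  · have hodd : ¬ Odd hv := by simpa [Nat.not_odd_iff_even] using he
    simp only [he, if_true, hodd, IsEmpty.forall_iff, and_true]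
    rcases lt_trichotomy (k : ℕ) i with h | h | h
    · rw [if_pos h]
      exact (sum_single_fiber (N := n + 2) (a := (k : ℕ)) (by omega)
        (fun j => dn i j = (k : ℕ)) (fun j hj => by simp only [dn]; split <;> omega)
        (fun j => X (Sum.inl j))).symm
    · rw [if_neg (by omega), if_pos h]
      exact (sum_double_fiber (N := n + 2) (a := i) (b := i + 1) (by omega) (by omega)
        (by omega) (fun j => dn i j = (k : ℕ))
        (fun j hj => by simp only [dn]; split <;> omega) (fun j => X (Sum.inl j))).symm
    · rw [if_neg (by omega), if_neg (by omega)]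
      exact (sum_single_fiber (N := n + 2) (a := (k : ℕ) + 1) (by omega)
        (fun j => dn i j = (k : ℕ)) (fun j hj => by simp only [dn]; split <;> omega)
        (fun j => X (Sum.inl j))).symm
  · have hodd : Odd hv := Nat.not_even_iff_odd.mp he
    simp only [he, if_false, hodd, true_implies]
    by_cases h : (k : ℕ) < i
    · rw [if_pos h]
      exact (sum_single_fiber (N := n + 2) (a := (k : ℕ)) (by omega)
        (fun j => dn i j = (k : ℕ) ∧ ¬ j = i)
        (fun j hj => by simp only [dn]; split <;> omega) (fun j => X (Sum.inr j))).symm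
    · rw [if_neg h]
      exact (sum_single_fiber (N := n + 2) (a := (k : ℕ) + 1) (by omega)
        (fun j => dn i j = (k : ℕ) ∧ ¬ j = i)
        (fun j hj => by simp only [dn]; split <;> omega) (fun j => X (Sum.inr j))).symm

/-- The key combinatorial equivalence between order conditions for `r` and for `sg r`. -/
lemma key {α : Type} [Fintype α] [PartialOrder α] (ht : α → ℕ) (hrk : IsRanked ht)
    (n i : ℕ) (hi : i ≤ n) (r : α → Fin (n + 2))
    (hD : ∀ v, Odd (ht v) → (r v : ℕ) ≠ i) :
    ((OrderCond ht r ∧ ∀ v, Odd (ht v) → (r v : ℕ) < n + 1) ↔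
      (OrderCond ht (sg i n hi r) ∧ ∀ v, Odd (ht v) → (sg i n hi r v : ℕ) < n)) := by
  have hsg : ∀ v, (sg i n hi r v : ℕ) = dn i (r v : ℕ) := fun v => rfl
  constructor
  · rintro ⟨⟨hle, hlt⟩, hbd⟩
    refine ⟨⟨fun x y hxy => ?_, fun x y hxy hox => ?_⟩, fun v hv => ?_⟩
    · have := hle x y hxy
      rw [Fin.le_def] at this ⊢
      rw [hsg, hsg]; unfold dn; split <;> split <;> omega
    · have h1 := hlt x y hxy hox
      have h2 := hD x hox
      rw [Fin.lt_def] at h1 ⊢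
      rw [hsg, hsg]; unfold dn; split <;> split <;> omega
    · have h1 := hbd v hv
      have h2 := hD v hv
      rw [hsg]; simp only [dn]; split <;> omega
  · rintro ⟨⟨hle, hlt⟩, hbd⟩
    have hrev : ∀ x y : α, x < y → Odd (ht x) → (r x : ℕ) < (r y : ℕ) := by
      intro x y hxy hox
      have h1 := hlt x y hxy hox
      rw [Fin.lt_def, hsg, hsg] at h1
      revert h1; unfold dn; split <;> split <;> omega
    refine ⟨⟨fun x y hxy => ?_, fun x y hxy hox => Fin.lt_def.mpr (hrev x y hxy hox)⟩,
      fun v hv => ?_⟩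
    · rcases eq_or_lt_of_le hxy with rfl | hxy'
      · exact le_refl _
      rw [Fin.le_def]
      by_cases hox : Odd (ht x)
      · exact le_of_lt (hrev x y hxy' hox)
      have hex : Even (ht x) := Nat.not_odd_iff_even.mp hox
      have h1 := hle x y hxy
      rw [Fin.le_def, hsg, hsg] at h1
      by_cases hoy : Odd (ht y)
      · have h2 := hD y hoy
        revert h1; unfold dn; split <;> split <;> omega
      -- both even: use the chain argument
      have hey : Even (ht y) := Nat.not_odd_iff_even.mp hoy
      obtain ⟨z, hxz, hzy⟩ := exists_covBy_le_of_lt hxy'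
      have hhtz : ht z = ht x + 1 := hrk.2 x z hxz
      have hoz : Odd (ht z) := by rw [hhtz]; exact Even.add_one hex
      have hzy' : z < y := by
        rcases eq_or_lt_of_le hzy with rfl | h
        · exact absurd hoz (by simpa [Nat.not_odd_iff_even] using hey)
        · exact h
      have h3 := hle x z (le_of_lt hxz.lt)
      rw [Fin.le_def, hsg, hsg] at h3
      have h4 := hlt z y hzy' hoz
      rw [Fin.lt_def, hsg, hsg] at h4
      revert h1 h3 h4; unfold dn; split <;> split <;> split <;> omega
    · have h1 := hbd v hv
      have h2 := hD v hv
      rw [hsg] at h1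
      revert h1; simp only [dn]; split <;> omega

/-- For a finite ranked poset `P`, (paper) `m ≥ 1` and `1 ≤ i ≤ m`
(here `i` is 0-indexed, so `i < m`), substituting `q_{i+1} := 0` in `N_P^(m)` yields
`N_P^(m-1)` with `p_{i+1} + p_{i+2}` substituted for its `(i+1)`-st p-variable, the later
p-variables shifted up by one, and the q-variables from the `(i+1)`-st on shifted up by one. -/
theorem stmt0 (α : Type) [Fintype α] [PartialOrder α] (ht : α → ℕ) (hrk : IsRanked ht)
    (m i : ℕ) (hm : 1 ≤ m) (hi : i < m) :
    aeval (Sum.elim (fun j => (X (Sum.inl j) : MvPolynomial (ℕ ⊕ ℕ) ℚ))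
        (fun j => if j = i then 0 else X (Sum.inr j)))
      (NP α ht m) =
    aeval (Sum.elim
        (fun j => if j < i then (X (Sum.inl j) : MvPolynomial (ℕ ⊕ ℕ) ℚ)
          else if j = i then X (Sum.inl i) + X (Sum.inl (i + 1)) else X (Sum.inl (j + 1)))
        (fun j => if j < i then X (Sum.inr j) else X (Sum.inr (j + 1))))
      (NP α ht (m - 1)) := by
  
  obtain ⟨n, rfl⟩ : ∃ n, m = n + 1 := ⟨m - 1, by omega⟩
  have hin : i ≤ n := by omega
  have hm1 : n + 1 - 1 = n := by omega
  rw [hm1]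
  set φ := (Sum.elim (fun j => (X (Sum.inl j) : MvPolynomial (ℕ ⊕ ℕ) ℚ))
      (fun j => if j = i then 0 else X (Sum.inr j))) with hφ
  set ψ := (Sum.elim
      (fun j => if j < i then (X (Sum.inl j) : MvPolynomial (ℕ ⊕ ℕ) ℚ)
        else if j = i then X (Sum.inl i) + X (Sum.inl (i + 1)) else X (Sum.inl (j + 1)))
      (fun j => if j < i then X (Sum.inr j) else X (Sum.inr (j + 1)))) with hψ
  have hL : aeval φ (NP α ht (n + 1)) =
      ∑ r : α → Fin (n + 1 + 1),
        if ((OrderCond ht r ∧ ∀ v, Odd (ht v) → (r v : ℕ) < n + 1) ∧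
            ∀ v, Odd (ht v) → (r v : ℕ) ≠ i) then Mon ht r else 0 := by
    rw [NP, map_sum]
    refine Finset.sum_congr rfl fun r _ => ?_
    rw [apply_ite (aeval φ), map_zero, map_prod]
    by_cases hc : OrderCond ht r ∧ ∀ v, Odd (ht v) → (r v : ℕ) < n + 1
    · rw [if_pos hc]
      by_cases hd : ∀ v, Odd (ht v) → (r v : ℕ) ≠ i
      · rw [if_pos ⟨hc, hd⟩, Mon]
        refine Finset.prod_congr rfl fun v _ => ?_
        rw [apply_ite (aeval φ), aeval_X, aeval_X]
        by_cases he : Even (ht v)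
        · simp [he, hφ]
        · simp [he, hφ, hd v (Nat.not_even_iff_odd.mp he)]
      · rw [if_neg (fun h => hd h.2)]
        push_neg at hd
        obtain ⟨v, hv, hvi⟩ := hd
        refine Finset.prod_eq_zero (Finset.mem_univ v) ?_
        have he : ¬ Even (ht v) := Nat.not_even_iff_odd.mpr hv
        rw [apply_ite (aeval φ), aeval_X, aeval_X]
        simp [he, hφ, hvi]
    · rw [if_neg hc, if_neg (fun h => hc h.1)]
  have hexp : ∀ s : α → Fin (n + 1),
      (∏ v : α, aeval ψ (if Even (ht v) then
          (X (Sum.inl (s v : ℕ)) : MvPolynomial (ℕ ⊕ ℕ) ℚ) else X (Sum.inr (s v : ℕ)))) =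
      ∑ r : α → Fin (n + 1 + 1),
        if (∀ v, dn i (r v : ℕ) = (s v : ℕ) ∧ (Odd (ht v) → (r v : ℕ) ≠ i)) then
          Mon ht r else 0 := by
    intro s
    have h1 : ∀ v : α, aeval ψ (if Even (ht v) then
        (X (Sum.inl (s v : ℕ)) : MvPolynomial (ℕ ⊕ ℕ) ℚ) else X (Sum.inr (s v : ℕ))) =
        ∑ j : Fin (n + 2),
          if dn i (j : ℕ) = (s v : ℕ) ∧ (Odd (ht v) → (j : ℕ) ≠ i) then
            (if Even (ht v) then X (Sum.inl (j : ℕ)) else X (Sum.inr (j : ℕ))) else 0 := by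
      intro v
      rw [apply_ite (aeval ψ), aeval_X, aeval_X, ← factor_expand i n hin (ht v) (s v)]
      by_cases he : Even (ht v) <;> simp [he, hψ]
    rw [Finset.prod_congr rfl fun v _ => h1 v, Fintype.prod_sum]
    refine Finset.sum_congr rfl fun r _ => ?_
    by_cases h : ∀ v, dn i (r v : ℕ) = (s v : ℕ) ∧ (Odd (ht v) → (r v : ℕ) ≠ i)
    · rw [if_pos h, Mon]
      exact Finset.prod_congr rfl fun v _ => if_pos (h v)
    · rw [if_neg h]
      obtain ⟨v, hv⟩ := not_forall.mp h
      exact Finset.prod_eq_zero (Finset.mem_univ v) (if_neg hv)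
  have hR : aeval ψ (NP α ht n) =
      ∑ s : α → Fin (n + 1),
        ∑ r : α → Fin (n + 1 + 1),
          if ((OrderCond ht s ∧ ∀ v, Odd (ht v) → (s v : ℕ) < n) ∧
              ∀ v, dn i (r v : ℕ) = (s v : ℕ) ∧ (Odd (ht v) → (r v : ℕ) ≠ i)) then
            Mon ht r else 0 := by
    rw [NP, map_sum]
    refine Finset.sum_congr rfl fun s _ => ?_
    rw [apply_ite (aeval ψ), map_zero, map_prod]
    by_cases hq : OrderCond ht s ∧ ∀ v, Odd (ht v) → (s v : ℕ) < n
    · rw [if_pos hq, hexp s]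
      refine Finset.sum_congr rfl fun r _ => ?_
      by_cases h : ∀ v, dn i (r v : ℕ) = (s v : ℕ) ∧ (Odd (ht v) → (r v : ℕ) ≠ i)
      · rw [if_pos h, if_pos ⟨hq, h⟩]
      · rw [if_neg h, if_neg (fun hh => h hh.2)]
    · rw [if_neg hq]
      exact (Finset.sum_eq_zero fun r _ => if_neg (fun hh => hq hh.1)).symm
  rw [hL, hR, Finset.sum_comm]
  refine Finset.sum_congr rfl fun r _ => ?_
  by_cases hd : ∀ v, Odd (ht v) → (r v : ℕ) ≠ i
  · rw [Finset.sum_eq_single (sg i n hin r)]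
    · have h1 : ∀ v, dn i (r v : ℕ) = (sg i n hin r v : ℕ) ∧
          (Odd (ht v) → (r v : ℕ) ≠ i) := fun v => ⟨rfl, hd v⟩
      by_cases hc : OrderCond ht r ∧ ∀ v, Odd (ht v) → (r v : ℕ) < n + 1
      · rw [if_pos ⟨hc, hd⟩, if_pos ⟨(key ht hrk n i hin r hd).mp hc, h1⟩]
      · rw [if_neg (fun hh => hc hh.1), if_neg]
        rintro ⟨hq, -⟩
        exact hc ((key ht hrk n i hin r hd).mpr hq)
    · intro s _ hs
      rw [if_neg]
      rintro ⟨-, h⟩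
      exact hs (funext fun v => Fin.ext ((h v).1).symm)
    · intro h
      exact absurd (Finset.mem_univ _) h
  · rw [if_neg (fun hh => hd hh.2)]
    refine (Finset.sum_eq_zero fun s _ => if_neg ?_).symm
    rintro ⟨-, h⟩
    exact hd fun v hv => (h v).2 hv
end
end

section
/- Let P be a finite ranked poset, let m ≥ 1 and let 1 ≤ i ≤ m. Then substituting p_i := 0 in N_P^(m) yields the polynomial N_P^(m−1)(p₁,…,p_{i−1}, p_{i+1},…,p_{m+1}; q₁,…,q_{i−2}, q_{i−1}+q_i, q_{i+1},…,q_m); for i = 1 this right-hand side is to be read as N_P^(m−1)(p₂,…,p_{m+1}; q₂,…,q_m). -/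
open MvPolynomial
open scoped Classical

noncomputable section

section Stmt1Aux

private lemma stmt1_exists_covby_even {α : Type} [Fintype α] [PartialOrder α]
    (ht : α → ℕ) (hrk : IsRanked ht) {v : α} (hv : Odd (ht v)) :
    ∃ u, u ⋖ v ∧ Even (ht u) := by
  have hne : ht v ≠ 0 := by
    intro h
    rw [Nat.odd_iff, h] at hv
    omega
  have hmin : ¬ IsMin v := fun h => hne (hrk.1 v h)
  obtain ⟨u, hu⟩ := not_isMin_iff.mp hmin
  obtain ⟨w, _, hw2⟩ := exists_le_covBy_of_lt hu
  refine ⟨w, hw2, ?_⟩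
  have h2 := hrk.2 w v hw2
  rw [Nat.odd_iff] at hv
  rw [Nat.even_iff]
  omega

private def projF {α : Type} {n : ℕ} (i : ℕ) (hi : i ≤ n) (r : α → Fin (n + 1 + 1)) (v : α) :
    Fin (n + 1) :=
  ⟨if (r v : ℕ) < i then (r v : ℕ) else (r v : ℕ) - 1, by
    have := (r v).isLt; split <;> omega⟩

private def liftF {α : Type} {n : ℕ} (i : ℕ) (r' : α → Fin (n + 1)) (b : α → Bool) (v : α) :
    Fin (n + 1 + 1) :=
  ⟨(r' v : ℕ) + (if i ≤ (r' v : ℕ) ∨ b v = true then 1 else 0), by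
    have := (r' v).isLt; split <;> omega⟩

private def fbF {α : Type} (ht : α → ℕ) (i : ℕ) (v : α) (j : ℕ) (c : Bool) :
    MvPolynomial (ℕ ⊕ ℕ) ℚ :=
  if Odd (ht v) ∧ j + 1 = i then (if c then X (Sum.inr (j + 1)) else X (Sum.inr j))
  else if c then 0
  else if Even (ht v) then (if j < i then X (Sum.inl j) else X (Sum.inl (j + 1)))
  else if j + 1 < i then X (Sum.inr j) else X (Sum.inr (j + 1))

private lemma fbF_sum {α : Type} (ht : α → ℕ) (i : ℕ) (v : α) (j : ℕ) :
    (∑ c : Bool, fbF ht i v j c) =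
      if Even (ht v) then
        (if j < i then (X (Sum.inl j) : MvPolynomial (ℕ ⊕ ℕ) ℚ) else X (Sum.inl (j + 1)))
      else if j + 1 < i then X (Sum.inr j)
      else if j + 1 = i then X (Sum.inr j) + X (Sum.inr (j + 1))
      else X (Sum.inr (j + 1)) := by
  rw [Fintype.sum_bool]
  unfold fbF
  rcases Nat.even_or_odd (ht v) with hv | hv
  · have hodd : ¬ Odd (ht v) := by
      rw [Nat.even_iff] at hv; rw [Nat.odd_iff]; omega
    simp [hv, hodd]
  · have heven : ¬ Even (ht v) := by
      rw [Nat.odd_iff] at hv; rw [Nat.even_iff]; omega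
    by_cases hj : j + 1 = i
    · have hj2 : ¬ (j + 1 < i) := by omega
      simp [hv, heven, hj, hj2, add_comm]
    · simp [hv, heven, hj]

end Stmt1Aux

/-- For a finite ranked poset `P`, (paper) `m ≥ 1` and `1 ≤ i ≤ m`
(here `i` is 0-indexed, so `i < m`), substituting `p_{i+1} := 0` in `N_P^(m)` yields
`N_P^(m-1)` with its p-variables from the `(i+1)`-st on shifted up by one, `q_i + q_{i+1}`
substituted for its `i`-th q-variable, and the later q-variables shifted up by one;
for (paper) `i = 1`, i.e. Lean `i = 0`, all variables are simply shifted up by one. -/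
theorem stmt1 (α : Type) [Fintype α] [PartialOrder α] (ht : α → ℕ) (hrk : IsRanked ht)
    (m i : ℕ) (hm : 1 ≤ m) (hi : i < m) :
    aeval (Sum.elim (fun j => if j = i then 0 else (X (Sum.inl j) : MvPolynomial (ℕ ⊕ ℕ) ℚ))
        (fun j => X (Sum.inr j)))
      (NP α ht m) =
    aeval (Sum.elim
        (fun j => if j < i then (X (Sum.inl j) : MvPolynomial (ℕ ⊕ ℕ) ℚ)
          else X (Sum.inl (j + 1)))
        (fun j => if j + 1 < i then X (Sum.inr j)
          else if j + 1 = i then X (Sum.inr j) + X (Sum.inr (j + 1))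
          else X (Sum.inr (j + 1))))
      (NP α ht (m - 1)) := by
  obtain ⟨n, rfl⟩ : ∃ n, m = n + 1 := ⟨m - 1, by omega⟩
  have hin : i ≤ n := by omega
  have haeval : ∀ (N : ℕ) (φ : ℕ ⊕ ℕ → MvPolynomial (ℕ ⊕ ℕ) ℚ),
      aeval φ (NP α ht N) = ∑ r : α → Fin (N + 1),
        if OrderCond ht r ∧ ∀ v, Odd (ht v) → (r v : ℕ) < N then
          ∏ v : α, if Even (ht v) then φ (Sum.inl (r v : ℕ)) else φ (Sum.inr (r v : ℕ))
        else 0 := by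
    intro N φ
    unfold NP
    rw [map_sum]
    refine Finset.sum_congr rfl fun r _ => ?_
    split_ifs with h
    · rw [map_prod]
      refine Finset.prod_congr rfl fun v _ => ?_
      split_ifs with h2 <;> rw [aeval_X]
    · exact map_zero _
  rw [Nat.add_sub_cancel, haeval, haeval]
  simp only [Sum.elim_inl, Sum.elim_inr]
  have hRHS : (∑ r' : α → Fin (n + 1),
      if OrderCond ht r' ∧ ∀ v : α, Odd (ht v) → (r' v : ℕ) < n then
        ∏ v : α,
          if Even (ht v) then
            if (r' v : ℕ) < i then (X (Sum.inl (r' v : ℕ)) : MvPolynomial (ℕ ⊕ ℕ) ℚ)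
            else X (Sum.inl ((r' v : ℕ) + 1))
          else
            if (r' v : ℕ) + 1 < i then X (Sum.inr (r' v : ℕ))
            else
              if (r' v : ℕ) + 1 = i then X (Sum.inr (r' v : ℕ)) + X (Sum.inr ((r' v : ℕ) + 1))
              else X (Sum.inr ((r' v : ℕ) + 1))
      else 0) =
      ∑ p : (α → Fin (n + 1)) × (α → Bool),
        if OrderCond ht p.1 ∧ ∀ v : α, Odd (ht v) → (p.1 v : ℕ) < n then
          ∏ v : α, fbF ht i v (p.1 v : ℕ) (p.2 v)
        else 0 := by
    rw [Fintype.sum_prod_type]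
    refine Finset.sum_congr rfl fun r' _ => ?_
    by_cases h : OrderCond ht r' ∧ ∀ v : α, Odd (ht v) → (r' v : ℕ) < n
    · simp only [if_pos h]
      rw [← Fintype.prod_sum fun v c => fbF ht i v (r' v : ℕ) c]
      exact Finset.prod_congr rfl fun v _ => (fbF_sum ht i v _).symm
    · simp only [if_neg h]
      simp
  rw [hRHS]
  have hLne : ∀ r : α → Fin (n + 1 + 1),
      (if OrderCond ht r ∧ ∀ v : α, Odd (ht v) → (r v : ℕ) < n + 1 then
        ∏ v : α, if Even (ht v) then
            (if (r v : ℕ) = i then 0 else (X (Sum.inl (r v : ℕ)) : MvPolynomial (ℕ ⊕ ℕ) ℚ))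
          else X (Sum.inr (r v : ℕ))
      else 0) ≠ 0 →
      (OrderCond ht r ∧ ∀ v : α, Odd (ht v) → (r v : ℕ) < n + 1) ∧
        ∀ v, Even (ht v) → (r v : ℕ) ≠ i := by
    intro r h
    by_cases hc : OrderCond ht r ∧ ∀ v : α, Odd (ht v) → (r v : ℕ) < n + 1
    · rw [if_pos hc] at h
      refine ⟨hc, fun v hv hvi => h ?_⟩
      apply Finset.prod_eq_zero (Finset.mem_univ v)
      rw [if_pos hv, if_pos hvi]
    · rw [if_neg hc] at h
      exact absurd rfl h
  have key1 : ∀ r : α → Fin (n + 1 + 1), OrderCond ht r →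
      (∀ v, Even (ht v) → (r v : ℕ) ≠ i) →
      ∀ v, Odd (ht v) → (r v : ℕ) = i → 1 ≤ i := by
    intro r hC hav v hv hvi
    by_contra h
    obtain ⟨u, huv, hue⟩ := stmt1_exists_covby_even ht hrk hv
    have h1 := Fin.le_def.mp (hC.1 u v huv.le)
    have h2 := hav u hue
    omega
  have key2 : ∀ r : α → Fin (n + 1 + 1), OrderCond ht r →
      (∀ v, Even (ht v) → (r v : ℕ) ≠ i) →
      ∀ x y, x < y → Odd (ht x) → ¬((r x : ℕ) + 1 = i ∧ (r y : ℕ) = i) := by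
    rintro r hC hav x y hxy hx ⟨h1, h2⟩
    obtain ⟨z, hxz, hzy⟩ := exists_covBy_le_of_lt hxy
    have he : Even (ht z) := by
      have h3 := hrk.2 x z hxz
      rw [Nat.odd_iff] at hx
      rw [Nat.even_iff]
      omega
    have hlt := Fin.lt_def.mp (hC.2 x z hxz.lt hx)
    have hle := Fin.le_def.mp (hC.1 z y hzy)
    have := hav z he
    omega
  have hC'proj : ∀ r : α → Fin (n + 1 + 1), OrderCond ht r →
      (∀ v, Odd (ht v) → (r v : ℕ) < n + 1) →
      (∀ v, Even (ht v) → (r v : ℕ) ≠ i) →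
      OrderCond ht (projF i hin r) ∧ ∀ v, Odd (ht v) → ((projF i hin r) v : ℕ) < n := by
    intro r hC hb hav
    have key1' : ∀ v, (r v : ℕ) ≠ i ∨ 1 ≤ i := by
      intro v
      by_cases hvi : (r v : ℕ) = i
      · rcases Nat.even_or_odd (ht v) with hv | hv
        · exact absurd hvi (hav v hv)
        · exact Or.inr (key1 r hC hav v hv hvi)
      · exact Or.inl hvi
    refine ⟨⟨fun x y hxy => ?_, fun x y hxy hx => ?_⟩, fun v hv => ?_⟩
    · have h1 := Fin.le_def.mp (hC.1 x y hxy)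
      rw [Fin.le_def]
      show (if (r x : ℕ) < i then (r x : ℕ) else (r x : ℕ) - 1) ≤
        (if (r y : ℕ) < i then (r y : ℕ) else (r y : ℕ) - 1)
      split_ifs <;> omega
    · have h1 := Fin.lt_def.mp (hC.2 x y hxy hx)
      have h2 := key2 r hC hav x y hxy hx
      have h3 : (r x : ℕ) + 1 ≠ i ∨ (r y : ℕ) ≠ i := by
        by_cases h3 : (r x : ℕ) + 1 = i
        · exact Or.inr fun hy => h2 ⟨h3, hy⟩
        · exact Or.inl h3
      rw [Fin.lt_def]
      show (if (r x : ℕ) < i then (r x : ℕ) else (r x : ℕ) - 1) <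
        (if (r y : ℕ) < i then (r y : ℕ) else (r y : ℕ) - 1)
      have h4 := key1' x
      have h5 := key1' y
      rcases h3 with h3 | h3 <;> rcases h4 with h4 | h4 <;> rcases h5 with h5 | h5 <;>
        split_ifs <;> omega
    · have h1 := hb v hv
      have h2 : (r v : ℕ) ≠ i ∨ 1 ≤ i := by
        by_cases h : (r v : ℕ) = i
        · exact Or.inr (key1 r hC hav v hv h)
        · exact Or.inl h
      show (if (r v : ℕ) < i then (r v : ℕ) else (r v : ℕ) - 1) < n
      rcases h2 with h2 | h2 <;> split_ifs <;> omega
  refine Finset.sum_bij_ne_zero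
    (fun r _ _ => (projF i hin r, fun v => decide ((r v : ℕ) = i)))
    (fun _ _ _ => Finset.mem_univ _) ?_ ?_ ?_
  · -- injectivity
    intro r₁ _ hr₁ r₂ _ hr₂ heq
    have e1 : projF i hin r₁ = projF i hin r₂ := congrArg Prod.fst heq
    have e2 : (fun v => decide ((r₁ v : ℕ) = i)) = fun v => decide ((r₂ v : ℕ) = i) :=
      congrArg Prod.snd heq
    funext v
    have e1v : (if (r₁ v : ℕ) < i then (r₁ v : ℕ) else (r₁ v : ℕ) - 1) =
        (if (r₂ v : ℕ) < i then (r₂ v : ℕ) else (r₂ v : ℕ) - 1) :=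
      congrArg Fin.val (congrFun e1 v)
    have e2v : ((r₁ v : ℕ) = i) ↔ ((r₂ v : ℕ) = i) := decide_eq_decide.mp (congrFun e2 v)
    have b1 := (r₁ v).isLt
    have b2 := (r₂ v).isLt
    apply Fin.ext
    have e2v' : ((r₁ v : ℕ) = i ∧ (r₂ v : ℕ) = i) ∨ ((r₁ v : ℕ) ≠ i ∧ (r₂ v : ℕ) ≠ i) := by
      by_cases h : (r₁ v : ℕ) = i
      · exact Or.inl ⟨h, e2v.mp h⟩
      · exact Or.inr ⟨h, fun h2 => h (e2v.mpr h2)⟩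
    rcases e2v' with ⟨ha, hb⟩ | ⟨ha, hb⟩ <;> split_ifs at e1v <;> omega
  · -- surjectivity
    rintro ⟨r', b⟩ _ hg
    have hC' : OrderCond ht r' ∧ ∀ v : α, Odd (ht v) → (r' v : ℕ) < n := by
      by_contra h
      rw [if_neg h] at hg
      exact hg rfl
    rw [if_pos hC'] at hg
    have hfac : ∀ v, fbF ht i v (r' v : ℕ) (b v) ≠ 0 := by
      intro v hv0
      exact hg (Finset.prod_eq_zero (Finset.mem_univ v) hv0)
    have hb : ∀ v, ¬(Odd (ht v) ∧ (r' v : ℕ) + 1 = i) → b v = false := by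
      intro v hnc
      rcases Bool.eq_false_or_eq_true (b v) with hbv | hbv
      · exfalso
        apply hfac v
        unfold fbF
        rw [if_neg hnc, hbv]
        simp
      · exact hbv
    have hlval : ∀ v, (liftF i r' b v : ℕ) =
        (r' v : ℕ) + (if i ≤ (r' v : ℕ) ∨ b v = true then 1 else 0) := fun v => rfl
    have hbx' : ∀ v, b v = true → ¬ i ≤ (r' v : ℕ) → Odd (ht v) ∧ (r' v : ℕ) + 1 = i := by
      intro v hbv _
      by_contra hnc
      rw [hb v hnc] at hbv
      exact Bool.false_ne_true hbv
    have havL : ∀ v, Even (ht v) → (liftF i r' b v : ℕ) ≠ i := by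
      intro v hv
      have hbv : b v = false := hb v (by
        rintro ⟨hodd, -⟩
        rw [Nat.odd_iff] at hodd
        rw [Nat.even_iff] at hv
        omega)
      rw [hlval]
      split_ifs with h
      · rcases h with h | h
        · omega
        · rw [hbv] at h
          exact absurd h Bool.false_ne_true
      · have h2 : ¬ i ≤ (r' v : ℕ) := fun h' => h (Or.inl h')
        omega
    have hCr : OrderCond ht (liftF i r' b) ∧
        ∀ v : α, Odd (ht v) → (liftF i r' b v : ℕ) < n + 1 := by
      refine ⟨⟨fun x y hxy => ?_, fun x y hxy hx => ?_⟩, fun v hv => ?_⟩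
      · rcases eq_or_ne x y with rfl | hne'
        · exact le_refl _
        have hlt : x < y := lt_of_le_of_ne hxy hne'
        have hle := Fin.le_def.mp (hC'.1.1 x y hxy)
        rw [Fin.le_def, hlval, hlval]
        split_ifs with h1 h2
        · omega
        · have h2a : ¬ i ≤ (r' y : ℕ) := fun h' => h2 (Or.inl h')
          rcases h1 with h1 | h1
          · omega
          · by_cases hile : i ≤ (r' x : ℕ)
            · omega
            · obtain ⟨hodd, hchoice⟩ := hbx' x h1 hile
              have h5 := Fin.lt_def.mp (hC'.1.2 x y hlt hodd)
              omega
        · omega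
        · omega
      · have hlt := Fin.lt_def.mp (hC'.1.2 x y hxy hx)
        rw [Fin.lt_def, hlval, hlval]
        split_ifs with h1 h2
        · omega
        · have h2a : ¬ i ≤ (r' y : ℕ) := fun h' => h2 (Or.inl h')
          rcases h1 with h1 | h1
          · omega
          · by_cases hile : i ≤ (r' x : ℕ)
            · omega
            · obtain ⟨-, hchoice⟩ := hbx' x h1 hile
              omega
        · omega
        · omega
      · have := hC'.2 v hv
        rw [hlval]
        split_ifs <;> omega
    refine ⟨liftF i r' b, Finset.mem_univ _, ?_, ?_⟩
    · -- the corresponding left-hand term is nonzero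
      rw [if_pos hCr]
      rw [Finset.prod_ne_zero_iff]
      intro v _
      rcases Nat.even_or_odd (ht v) with hv | hv
      · have h2 := havL v hv
        rw [if_pos hv, if_neg h2]
        apply MvPolynomial.X_ne_zero
      · have hv' : ¬ Even (ht v) := by
          rw [Nat.odd_iff] at hv; rw [Nat.even_iff]; omega
        rw [if_neg hv']
        apply MvPolynomial.X_ne_zero
    · -- the image is (r', b)
      refine Prod.ext ?_ ?_
      · funext v
        apply Fin.ext
        show (if (liftF i r' b v : ℕ) < i then (liftF i r' b v : ℕ)
          else (liftF i r' b v : ℕ) - 1) = (r' v : ℕ)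
        rcases Bool.eq_false_or_eq_true (b v) with hbv | hbv
        · by_cases hile : i ≤ (r' v : ℕ)
          · have hl : (liftF i r' b v : ℕ) = (r' v : ℕ) + 1 := by
              rw [hlval, if_pos (Or.inl hile)]
            rw [hl]
            split_ifs <;> omega
          · obtain ⟨-, hchoice⟩ := hbx' v hbv hile
            have hl : (liftF i r' b v : ℕ) = (r' v : ℕ) + 1 := by
              rw [hlval, if_pos (Or.inr hbv)]
            rw [hl]
            split_ifs <;> omega
        · by_cases hile : i ≤ (r' v : ℕ)
          · have hl : (liftF i r' b v : ℕ) = (r' v : ℕ) + 1 := by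
              rw [hlval, if_pos (Or.inl hile)]
            rw [hl]
            split_ifs <;> omega
          · have hl : (liftF i r' b v : ℕ) = (r' v : ℕ) := by
              rw [hlval, if_neg (by
                rintro (h | h)
                · exact hile h
                · rw [hbv] at h
                  exact Bool.false_ne_true h)]
              omega
            rw [hl]
            split_ifs <;> omega
      · funext v
        show decide ((liftF i r' b v : ℕ) = i) = b v
        rcases Bool.eq_false_or_eq_true (b v) with hbv | hbv
        · rw [hbv]
          apply decide_eq_true
          by_cases hile : i ≤ (r' v : ℕ)
          · exfalso
            apply hfac v
            unfold fbF
            rw [if_neg (show ¬(Odd (ht v) ∧ (r' v : ℕ) + 1 = i) from fun hcc => by omega),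
              hbv]
            simp
          · obtain ⟨-, hchoice⟩ := hbx' v hbv hile
            rw [hlval, if_pos (Or.inr hbv)]
            omega
        · rw [hbv]
          apply decide_eq_false
          rw [hlval]
          split_ifs with h
          · rcases h with h | h
            · omega
            · rw [hbv] at h
              exact absurd h Bool.false_ne_true
          · have h2 : ¬ i ≤ (r' v : ℕ) := fun h' => h (Or.inl h')
            omega
  · -- equality of the terms
    intro r _ hr
    obtain ⟨⟨hC, hbd⟩, hav⟩ := hLne r hr
    have hC' := hC'proj r hC hbd hav
    dsimp only
    rw [if_pos ⟨hC, hbd⟩, if_pos hC']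
    refine Finset.prod_congr rfl fun v _ => ?_
    have hproj : ((projF i hin r) v : ℕ) =
        if (r v : ℕ) < i then (r v : ℕ) else (r v : ℕ) - 1 := rfl
    rcases Nat.even_or_odd (ht v) with hv | hv
    · have hnotodd : ¬ Odd (ht v) := by
        rw [Nat.even_iff] at hv; rw [Nat.odd_iff]; omega
      have hne := hav v hv
      rw [if_pos hv, if_neg hne]
      by_cases h2 : (r v : ℕ) < i
      · have hp : ((projF i hin r) v : ℕ) = (r v : ℕ) := by rw [hproj, if_pos h2]
        rw [hp]
        unfold fbF
        rw [if_neg (show ¬(Odd (ht v) ∧ (r v : ℕ) + 1 = i) from fun hcc => hnotodd hcc.1),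
          decide_eq_false hne, if_neg Bool.false_ne_true, if_pos hv, if_pos h2]
      · have hp : ((projF i hin r) v : ℕ) = (r v : ℕ) - 1 := by rw [hproj, if_neg h2]
        rw [hp]
        unfold fbF
        rw [if_neg (show ¬(Odd (ht v) ∧ (r v : ℕ) - 1 + 1 = i) from fun hcc => hnotodd hcc.1),
          decide_eq_false hne, if_neg Bool.false_ne_true, if_pos hv,
          if_neg (show ¬((r v : ℕ) - 1 < i) from by omega)]
        rw [show (r v : ℕ) - 1 + 1 = (r v : ℕ) from by omega]
    · have hnoteven : ¬ Even (ht v) := by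
        rw [Nat.odd_iff] at hv; rw [Nat.even_iff]; omega
      rw [if_neg hnoteven]
      by_cases hti : (r v : ℕ) = i
      · have h1i : 1 ≤ i := key1 r hC hav v hv hti
        have hp : ((projF i hin r) v : ℕ) = i - 1 := by
          rw [hproj, if_neg (by omega)]
          omega
        rw [hp]
        unfold fbF
        rw [if_pos (show Odd (ht v) ∧ (i - 1) + 1 = i from ⟨hv, by omega⟩),
          decide_eq_true hti, if_pos rfl]
        rw [show i - 1 + 1 = (r v : ℕ) from by omega]
      · by_cases h2 : (r v : ℕ) < i
        · have hp : ((projF i hin r) v : ℕ) = (r v : ℕ) := by rw [hproj, if_pos h2]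
          rw [hp]
          unfold fbF
          rw [decide_eq_false hti]
          by_cases h3 : (r v : ℕ) + 1 = i
          · rw [if_pos (show Odd (ht v) ∧ (r v : ℕ) + 1 = i from ⟨hv, h3⟩),
              if_neg Bool.false_ne_true]
          · rw [if_neg (show ¬(Odd (ht v) ∧ (r v : ℕ) + 1 = i) from fun hcc => h3 hcc.2),
              if_neg Bool.false_ne_true, if_neg hnoteven,
              if_pos (show (r v : ℕ) + 1 < i from by omega)]
        · have hp : ((projF i hin r) v : ℕ) = (r v : ℕ) - 1 := by rw [hproj, if_neg h2]
          rw [hp]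
          unfold fbF
          rw [decide_eq_false hti]
          rw [if_neg (show ¬(Odd (ht v) ∧ (r v : ℕ) - 1 + 1 = i) from fun hcc => by omega),
            if_neg Bool.false_ne_true, if_neg hnoteven,
            if_neg (show ¬((r v : ℕ) - 1 + 1 < i) from by omega)]
          rw [show (r v : ℕ) - 1 + 1 = (r v : ℕ) from by omega]
end
end

section
/- Let f = (f_{2m+1})_{m≥0} be a stable x-family satisfying equation (E_x). For each m ≥ 0 let h_m ∈ ℚ[p₁,…,p_{m+1},q₁,…,q_m] be obtained from f_{2m+1} by the inverse of the substitution (⋆), i.e. by setting x_{2i+1} := q_{i+1}+⋯+q_m+p_{i+1}+⋯+p_{m+1} (0 ≤ i ≤ m) and x_{2i} := q_i+⋯+q_m+p_{i+1}+⋯+p_{m+1} (1 ≤ i ≤ m). Then (h_m)_{m≥0} is a stable pq-family satisfying equations (E_pq). -/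
open MvPolynomial
open scoped Classical

noncomputable section

section Helpers

variable {M : Type*} [AddCommMonoid M]

lemma sum_shift (g : ℕ → M) (a b : ℕ) :
    ∑ j ∈ Finset.Ico a b, g (j + 1) = ∑ j ∈ Finset.Ico (a + 1) (b + 1), g j := by
  rw [Finset.sum_Ico_eq_sum_range, Finset.sum_Ico_eq_sum_range]
  refine Finset.sum_congr (by congr 1; omega) fun j _ => by congr 1; omega

lemma sum_ite_top (g : ℕ → M) (a b : ℕ) :
    ∑ j ∈ Finset.Ico a (b + 1), (if j = b then 0 else g j) = ∑ j ∈ Finset.Ico a b, g j := by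
  rcases le_or_gt a b with h | h
  · rw [Finset.sum_Ico_succ_top h, if_pos rfl, add_zero]
    exact Finset.sum_congr rfl fun j hj =>
      if_neg (by rw [Finset.mem_Ico] at hj; omega)
  · rw [Finset.Ico_eq_empty (by omega), Finset.Ico_eq_empty (by omega),
      Finset.sum_empty, Finset.sum_empty]

lemma sum_ite_bot (g : ℕ → M) {a b : ℕ} (h : a < b) :
    ∑ j ∈ Finset.Ico a b, (if j = a then 0 else g j) = ∑ j ∈ Finset.Ico (a + 1) b, g j := by
  rw [Finset.sum_eq_sum_Ico_succ_bot h, if_pos rfl, zero_add]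
  exact Finset.sum_congr rfl fun j hj =>
    if_neg (by rw [Finset.mem_Ico] at hj; omega)

lemma sum_ite_zero_ge (g : ℕ → M) {i a : ℕ} (b : ℕ) (h : i < a) :
    ∑ j ∈ Finset.Ico a b, (if j = i then 0 else g j) = ∑ j ∈ Finset.Ico a b, g j :=
  Finset.sum_congr rfl fun j hj => if_neg (by rw [Finset.mem_Ico] at hj; omega)

lemma sum_ite_zero_split (g : ℕ → M) {i a b : ℕ} (h1 : a ≤ i) (h2 : i < b) :
    ∑ j ∈ Finset.Ico a b, (if j = i then 0 else g j) =
      (∑ j ∈ Finset.Ico a i, g j) + ∑ j ∈ Finset.Ico (i + 1) b, g j := by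
  rw [← Finset.sum_Ico_consecutive _ h1 (le_of_lt h2)]
  congr 1
  · exact Finset.sum_congr rfl fun j hj => if_neg (by rw [Finset.mem_Ico] at hj; omega)
  · exact sum_ite_bot g h2

lemma sum_sh_ge (g : ℕ → M) {i a : ℕ} (b : ℕ) (h : i ≤ a) :
    ∑ j ∈ Finset.Ico a b, (if j < i then g j else g (j + 1)) =
      ∑ j ∈ Finset.Ico (a + 1) (b + 1), g j := by
  rw [← sum_shift]
  exact Finset.sum_congr rfl fun j hj => if_neg (by rw [Finset.mem_Ico] at hj; omega)

lemma sum_sh_split (g : ℕ → M) {i a b : ℕ} (h1 : a ≤ i) (h2 : i ≤ b) :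
    ∑ j ∈ Finset.Ico a b, (if j < i then g j else g (j + 1)) =
      (∑ j ∈ Finset.Ico a i, g j) + ∑ j ∈ Finset.Ico (i + 1) (b + 1), g j := by
  rw [← Finset.sum_Ico_consecutive _ h1 h2]
  congr 1
  · exact Finset.sum_congr rfl fun j hj => if_pos (by rw [Finset.mem_Ico] at hj; omega)
  · exact sum_sh_ge g b (le_refl i)

lemma sum_mid_ge (g : ℕ → M) {i a : ℕ} (b : ℕ) (h : i < a) :
    ∑ j ∈ Finset.Ico a b,
        (if j < i then g j else if j = i then g i + g (i + 1) else g (j + 1)) =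
      ∑ j ∈ Finset.Ico (a + 1) (b + 1), g j := by
  rw [← sum_shift]
  refine Finset.sum_congr rfl fun j hj => ?_
  rw [Finset.mem_Ico] at hj
  rw [if_neg (by omega), if_neg (by omega)]

lemma sum_mid_split (g : ℕ → M) {i a b : ℕ} (h1 : a ≤ i) (h2 : i < b) :
    ∑ j ∈ Finset.Ico a b,
        (if j < i then g j else if j = i then g i + g (i + 1) else g (j + 1)) =
      ∑ j ∈ Finset.Ico a (b + 1), g j := by
  rw [← Finset.sum_Ico_consecutive _ h1 (le_of_lt h2),
    Finset.sum_eq_sum_Ico_succ_bot h2]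
  have e1 : ∑ j ∈ Finset.Ico a i,
      (if j < i then g j else if j = i then g i + g (i + 1) else g (j + 1)) =
      ∑ j ∈ Finset.Ico a i, g j :=
    Finset.sum_congr rfl fun j hj => if_pos (by rw [Finset.mem_Ico] at hj; omega)
  have e2 : ∑ j ∈ Finset.Ico (i + 1) b,
      (if j < i then g j else if j = i then g i + g (i + 1) else g (j + 1)) =
      ∑ j ∈ Finset.Ico (i + 2) (b + 1), g j := by
    rw [← sum_shift]
    refine Finset.sum_congr rfl fun j hj => ?_
    rw [Finset.mem_Ico] at hj
    rw [if_neg (by omega), if_neg (by omega)]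
  rw [e1, e2, if_neg (lt_irrefl i), if_pos rfl,
    ← Finset.sum_Ico_consecutive g h1 (show i ≤ b + 1 by omega),
    Finset.sum_eq_sum_Ico_succ_bot (show i < b + 1 by omega) g,
    Finset.sum_eq_sum_Ico_succ_bot (show i + 1 < b + 1 by omega) g]
  simp only [add_assoc]

lemma sum_uq_ge (g : ℕ → M) {i a : ℕ} (b : ℕ) (h : i ≤ a) :
    ∑ j ∈ Finset.Ico a b,
        (if j + 1 < i then g j else if j + 1 = i then g j + g (j + 1) else g (j + 1)) =
      ∑ j ∈ Finset.Ico (a + 1) (b + 1), g j := by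
  rw [← sum_shift]
  refine Finset.sum_congr rfl fun j hj => ?_
  rw [Finset.mem_Ico] at hj
  rw [if_neg (by omega), if_neg (by omega)]

lemma sum_uq_split (g : ℕ → M) {i a b : ℕ} (h1 : a < i) (h2 : i ≤ b) :
    ∑ j ∈ Finset.Ico a b,
        (if j + 1 < i then g j else if j + 1 = i then g j + g (j + 1) else g (j + 1)) =
      ∑ j ∈ Finset.Ico a (b + 1), g j := by
  obtain ⟨t, rfl⟩ : ∃ t, i = t + 1 := ⟨i - 1, by omega⟩
  rw [← Finset.sum_Ico_consecutive _ (show a ≤ t by omega) (show t ≤ b by omega),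
    Finset.sum_eq_sum_Ico_succ_bot (show t < b by omega)]
  have e1 : ∑ j ∈ Finset.Ico a t,
      (if j + 1 < t + 1 then g j else if j + 1 = t + 1 then g j + g (j + 1) else g (j + 1)) =
      ∑ j ∈ Finset.Ico a t, g j :=
    Finset.sum_congr rfl fun j hj => if_pos (by rw [Finset.mem_Ico] at hj; omega)
  have e2 : ∑ j ∈ Finset.Ico (t + 1) b,
      (if j + 1 < t + 1 then g j else if j + 1 = t + 1 then g j + g (j + 1) else g (j + 1)) =
      ∑ j ∈ Finset.Ico (t + 2) (b + 1), g j := by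
    rw [← sum_shift]
    refine Finset.sum_congr rfl fun j hj => ?_
    rw [Finset.mem_Ico] at hj
    rw [if_neg (by omega), if_neg (by omega)]
  rw [e1, e2, if_neg (by omega), if_pos rfl,
    ← Finset.sum_Ico_consecutive g (show a ≤ t by omega) (show t ≤ b + 1 by omega),
    Finset.sum_eq_sum_Ico_succ_bot (show t < b + 1 by omega) g,
    Finset.sum_eq_sum_Ico_succ_bot (show t + 1 < b + 1 by omega) g]
  simp only [add_assoc]

end Helpers

lemma xToPQ_def (m k : ℕ) :
    xToPQ m k = (∑ j ∈ Finset.Ico (k / 2) m, X (Sum.inr j)) +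
      ∑ j ∈ Finset.Ico ((k + 1) / 2) (m + 1), X (Sum.inl j) := by
  rw [xToPQ]
  by_cases h : k % 2 = 0
  · rw [if_pos h, show (k + 1) / 2 = k / 2 from by omega]
  · rw [if_neg h, show (k + 1) / 2 = k / 2 + 1 from by omega]

lemma aeval_funext {S : Type*} [CommSemiring S] [Algebra ℚ S]
    (p : MvPolynomial ℕ ℚ) {F G : ℕ → S} (h : ∀ k, F k = G k) :
    aeval F p = aeval G p := by
  rw [show F = G from funext h]
section ComputeLemmas

/-- substitution q_i := 0 -/
def S1 (i : ℕ) : ℕ ⊕ ℕ → MvPolynomial (ℕ ⊕ ℕ) ℚ :=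
  Sum.elim (fun j => X (Sum.inl j)) (fun j => if j = i then 0 else X (Sum.inr j))

def T1 (i : ℕ) : ℕ ⊕ ℕ → MvPolynomial (ℕ ⊕ ℕ) ℚ :=
  Sum.elim
    (fun j => if j < i then (X (Sum.inl j) : MvPolynomial (ℕ ⊕ ℕ) ℚ)
      else if j = i then X (Sum.inl i) + X (Sum.inl (i + 1)) else X (Sum.inl (j + 1)))
    (fun j => if j < i then X (Sum.inr j) else X (Sum.inr (j + 1)))

/-- substitution p_i := 0 -/
def S2 (i : ℕ) : ℕ ⊕ ℕ → MvPolynomial (ℕ ⊕ ℕ) ℚ :=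
  Sum.elim (fun j => if j = i then 0 else X (Sum.inl j)) (fun j => X (Sum.inr j))

def T2 (i : ℕ) : ℕ ⊕ ℕ → MvPolynomial (ℕ ⊕ ℕ) ℚ :=
  Sum.elim
    (fun j => if j < i then (X (Sum.inl j) : MvPolynomial (ℕ ⊕ ℕ) ℚ)
      else X (Sum.inl (j + 1)))
    (fun j => if j + 1 < i then X (Sum.inr j)
      else if j + 1 = i then X (Sum.inr j) + X (Sum.inr (j + 1))
      else X (Sum.inr (j + 1)))

lemma hc1E (m i a : ℕ) : aeval (S1 i) (xToPQ (m + 1) (2 * a)) =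
    (∑ j ∈ Finset.Ico a (m + 1), if j = i then 0 else X (Sum.inr j)) +
      ∑ j ∈ Finset.Ico a (m + 2), X (Sum.inl j) := by
  rw [xToPQ_def, show 2 * a / 2 = a from by omega, show (2 * a + 1) / 2 = a from by omega]
  simp only [map_add, map_sum, aeval_X, S1, Sum.elim_inl, Sum.elim_inr]

lemma hc1O (m i a : ℕ) : aeval (S1 i) (xToPQ (m + 1) (2 * a + 1)) =
    (∑ j ∈ Finset.Ico a (m + 1), if j = i then 0 else X (Sum.inr j)) +
      ∑ j ∈ Finset.Ico (a + 1) (m + 2), X (Sum.inl j) := by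
  rw [xToPQ_def, show (2 * a + 1) / 2 = a from by omega,
    show (2 * a + 1 + 1) / 2 = a + 1 from by omega]
  simp only [map_add, map_sum, aeval_X, S1, Sum.elim_inl, Sum.elim_inr]

lemma hd1E (m i a : ℕ) : aeval (T1 i) (xToPQ m (2 * a)) =
    (∑ j ∈ Finset.Ico a m, if j < i then X (Sum.inr j) else X (Sum.inr (j + 1))) +
      ∑ j ∈ Finset.Ico a (m + 1),
        (if j < i then (X (Sum.inl j) : MvPolynomial (ℕ ⊕ ℕ) ℚ)
          else if j = i then X (Sum.inl i) + X (Sum.inl (i + 1)) else X (Sum.inl (j + 1))) := by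
  rw [xToPQ_def, show 2 * a / 2 = a from by omega, show (2 * a + 1) / 2 = a from by omega]
  simp only [map_add, map_sum, aeval_X, T1, Sum.elim_inl, Sum.elim_inr]

lemma hd1O (m i a : ℕ) : aeval (T1 i) (xToPQ m (2 * a + 1)) =
    (∑ j ∈ Finset.Ico a m, if j < i then X (Sum.inr j) else X (Sum.inr (j + 1))) +
      ∑ j ∈ Finset.Ico (a + 1) (m + 1),
        (if j < i then (X (Sum.inl j) : MvPolynomial (ℕ ⊕ ℕ) ℚ)
          else if j = i then X (Sum.inl i) + X (Sum.inl (i + 1)) else X (Sum.inl (j + 1))) := by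
  rw [xToPQ_def, show (2 * a + 1) / 2 = a from by omega,
    show (2 * a + 1 + 1) / 2 = a + 1 from by omega]
  simp only [map_add, map_sum, aeval_X, T1, Sum.elim_inl, Sum.elim_inr]

lemma hc2E (m i a : ℕ) : aeval (S2 i) (xToPQ (m + 1) (2 * a)) =
    (∑ j ∈ Finset.Ico a (m + 1), X (Sum.inr j)) +
      ∑ j ∈ Finset.Ico a (m + 2), (if j = i then 0 else X (Sum.inl j)) := by
  rw [xToPQ_def, show 2 * a / 2 = a from by omega, show (2 * a + 1) / 2 = a from by omega]
  simp only [map_add, map_sum, aeval_X, S2, Sum.elim_inl, Sum.elim_inr]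

lemma hc2O (m i a : ℕ) : aeval (S2 i) (xToPQ (m + 1) (2 * a + 1)) =
    (∑ j ∈ Finset.Ico a (m + 1), X (Sum.inr j)) +
      ∑ j ∈ Finset.Ico (a + 1) (m + 2), (if j = i then 0 else X (Sum.inl j)) := by
  rw [xToPQ_def, show (2 * a + 1) / 2 = a from by omega,
    show (2 * a + 1 + 1) / 2 = a + 1 from by omega]
  simp only [map_add, map_sum, aeval_X, S2, Sum.elim_inl, Sum.elim_inr]

lemma hd2E (m i a : ℕ) : aeval (T2 i) (xToPQ m (2 * a)) =
    (∑ j ∈ Finset.Ico a m,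
      (if j + 1 < i then (X (Sum.inr j) : MvPolynomial (ℕ ⊕ ℕ) ℚ)
        else if j + 1 = i then X (Sum.inr j) + X (Sum.inr (j + 1)) else X (Sum.inr (j + 1)))) +
      ∑ j ∈ Finset.Ico a (m + 1), (if j < i then X (Sum.inl j) else X (Sum.inl (j + 1))) := by
  rw [xToPQ_def, show 2 * a / 2 = a from by omega, show (2 * a + 1) / 2 = a from by omega]
  simp only [map_add, map_sum, aeval_X, T2, Sum.elim_inl, Sum.elim_inr]

lemma hd2O (m i a : ℕ) : aeval (T2 i) (xToPQ m (2 * a + 1)) =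
    (∑ j ∈ Finset.Ico a m,
      (if j + 1 < i then (X (Sum.inr j) : MvPolynomial (ℕ ⊕ ℕ) ℚ)
        else if j + 1 = i then X (Sum.inr j) + X (Sum.inr (j + 1)) else X (Sum.inr (j + 1)))) +
      ∑ j ∈ Finset.Ico (a + 1) (m + 1), (if j < i then X (Sum.inl j) else X (Sum.inl (j + 1))) := by
  rw [xToPQ_def, show (2 * a + 1) / 2 = a from by omega,
    show (2 * a + 1 + 1) / 2 = a + 1 from by omega]
  simp only [map_add, map_sum, aeval_X, T2, Sum.elim_inl, Sum.elim_inr]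

end ComputeLemmas
lemma stab_lemma (f : ℕ → MvPolynomial ℕ ℚ) (hst : IsStableX f) (m : ℕ) :
    aeval (Sum.elim
      (fun j => if j = m + 1 then 0 else (X (Sum.inl j) : MvPolynomial (ℕ ⊕ ℕ) ℚ))
      (fun j => if j = m then 0 else X (Sum.inr j)))
      (aeval (xToPQ (m + 1)) (f (m + 1))) = aeval (xToPQ m) (f m) := by
  rw [comp_aeval_apply]
  conv_rhs => rw [← hst.2 m, comp_aeval_apply]
  refine aeval_funext _ fun k => ?_
  rw [xToPQ_def]
  simp only [map_add, map_sum, aeval_X, Sum.elim_inl, Sum.elim_inr]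
  rw [sum_ite_top, show m + 2 = m + 1 + 1 from rfl, sum_ite_top]
  by_cases hk : k < 2 * m + 1
  · rw [if_pos hk, aeval_X, xToPQ_def]
  · rw [if_neg hk, map_zero, Finset.Ico_eq_empty (by omega), Finset.Ico_eq_empty (by omega),
      Finset.sum_empty, Finset.sum_empty, add_zero]

lemma vars_part (f : ℕ → MvPolynomial ℕ ℚ) (m : ℕ) :
    (aeval (xToPQ m) (f m)).vars ⊆
      (Finset.range (m + 1)).image Sum.inl ∪ (Finset.range m).image Sum.inr := by
  intro v hv
  have h2 := vars_bind₁ (xToPQ m) (f m) hv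
  rw [Finset.mem_biUnion] at h2
  obtain ⟨k, _, hk⟩ := h2
  rw [xToPQ_def] at hk
  have h3 := vars_add_subset _ _ hk
  rw [Finset.mem_union] at h3
  rcases h3 with h | h
  · have h4 := vars_sum_subset _ _ h
    rw [Finset.mem_biUnion] at h4
    obtain ⟨j, hj, hjv⟩ := h4
    rw [vars_X, Finset.mem_singleton] at hjv
    subst hjv
    rw [Finset.mem_Ico] at hj
    exact Finset.mem_union_right _ (Finset.mem_image_of_mem _ (Finset.mem_range.2 hj.2))
  · have h4 := vars_sum_subset _ _ h
    rw [Finset.mem_biUnion] at h4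
    obtain ⟨j, hj, hjv⟩ := h4
    rw [vars_X, Finset.mem_singleton] at hjv
    subst hjv
    rw [Finset.mem_Ico] at hj
    exact Finset.mem_union_left _ (Finset.mem_image_of_mem _ (Finset.mem_range.2 hj.2))
lemma epq1 (f : ℕ → MvPolynomial ℕ ℚ) (hex : SatisfiesEx f) (m i : ℕ) (him : i ≤ m) :
    aeval (S1 i) (aeval (xToPQ (m + 1)) (f (m + 1))) =
      aeval (T1 i) (aeval (xToPQ m) (f m)) := by
  rw [comp_aeval_apply, comp_aeval_apply]
  have hexe := hex m (2 * i + 1) (by omega)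
  have h1 := congrArg (fun p => aeval (fun k => aeval (S1 i) (xToPQ (m + 1) k)) p) hexe
  rw [comp_aeval_apply, comp_aeval_apply] at h1
  calc aeval (fun k => aeval (S1 i) (xToPQ (m + 1) k)) (f (m + 1))
      = aeval (fun k => aeval (fun k => aeval (S1 i) (xToPQ (m + 1) k))
          (if k = 2 * i + 1 + 1 then (X (2 * i + 1) : MvPolynomial ℕ ℚ) else X k))
          (f (m + 1)) := by
        refine aeval_funext _ fun k => ?_
        by_cases hk : k = 2 * i + 1 + 1
        · rw [if_pos hk, aeval_X, hk]
          rw [show 2 * i + 1 + 1 = 2 * (i + 1) from by ring, hc1E m i (i + 1), hc1O m i i]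
          congr 1
          rw [Finset.sum_eq_sum_Ico_succ_bot (show i < m + 1 by omega), if_pos rfl, zero_add]
        · rw [if_neg hk, aeval_X]
    _ = aeval (fun k => aeval (fun k => aeval (S1 i) (xToPQ (m + 1) k))
          (if k < 2 * i + 1 then (X k : MvPolynomial ℕ ℚ) else X (k + 2))) (f m) := h1
    _ = aeval (fun k => aeval (T1 i) (xToPQ m k)) (f m) := by
        refine aeval_funext _ fun k => ?_
        obtain ⟨a, rfl | rfl⟩ : ∃ a, k = 2 * a ∨ k = 2 * a + 1 := ⟨k / 2, by omega⟩
        · rcases Nat.lt_or_ge i a with hai | hai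
          · rw [if_neg (by omega), aeval_X]
            rw [show 2 * a + 2 = 2 * (a + 1) from by ring, hc1E m i (a + 1), hd1E m i a]
            congr 1
            · rw [sum_ite_zero_ge (fun j => (X (Sum.inr j) : MvPolynomial (ℕ ⊕ ℕ) ℚ))
                (m + 1) (by omega),
                sum_sh_ge (fun j => (X (Sum.inr j) : MvPolynomial (ℕ ⊕ ℕ) ℚ)) m hai.le]
            · rw [show m + 2 = m + 1 + 1 from rfl,
                sum_mid_ge (fun j => (X (Sum.inl j) : MvPolynomial (ℕ ⊕ ℕ) ℚ)) (m + 1) hai]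
          · rw [if_pos (by omega), aeval_X]
            rw [hc1E m i a, hd1E m i a]
            congr 1
            · rw [sum_ite_zero_split (fun j => (X (Sum.inr j) : MvPolynomial (ℕ ⊕ ℕ) ℚ))
                hai (by omega),
                sum_sh_split (fun j => (X (Sum.inr j) : MvPolynomial (ℕ ⊕ ℕ) ℚ)) hai him]
            · rw [show m + 2 = m + 1 + 1 from rfl,
                sum_mid_split (fun j => (X (Sum.inl j) : MvPolynomial (ℕ ⊕ ℕ) ℚ))
                  hai (by omega)]
        · rcases Nat.lt_or_ge a i with hai | hai
          · rw [if_pos (by omega), aeval_X]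
            rw [hc1O m i a, hd1O m i a]
            congr 1
            · rw [sum_ite_zero_split (fun j => (X (Sum.inr j) : MvPolynomial (ℕ ⊕ ℕ) ℚ))
                (by omega : a ≤ i) (by omega),
                sum_sh_split (fun j => (X (Sum.inr j) : MvPolynomial (ℕ ⊕ ℕ) ℚ))
                  (by omega : a ≤ i) him]
            · rw [show m + 2 = m + 1 + 1 from rfl,
                sum_mid_split (fun j => (X (Sum.inl j) : MvPolynomial (ℕ ⊕ ℕ) ℚ))
                  (by omega : a + 1 ≤ i) (by omega)]
          · rw [if_neg (by omega), aeval_X]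
            rw [show 2 * a + 1 + 2 = 2 * (a + 1) + 1 from by ring, hc1O m i (a + 1), hd1O m i a]
            congr 1
            · rw [sum_ite_zero_ge (fun j => (X (Sum.inr j) : MvPolynomial (ℕ ⊕ ℕ) ℚ))
                (m + 1) (by omega),
                sum_sh_ge (fun j => (X (Sum.inr j) : MvPolynomial (ℕ ⊕ ℕ) ℚ)) m hai]
            · rw [show m + 2 = m + 1 + 1 from rfl,
                sum_mid_ge (fun j => (X (Sum.inl j) : MvPolynomial (ℕ ⊕ ℕ) ℚ))
                  (m + 1) (by omega)]

lemma epq2 (f : ℕ → MvPolynomial ℕ ℚ) (hex : SatisfiesEx f) (m i : ℕ) (him : i ≤ m) :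
    aeval (S2 i) (aeval (xToPQ (m + 1)) (f (m + 1))) =
      aeval (T2 i) (aeval (xToPQ m) (f m)) := by
  rw [comp_aeval_apply, comp_aeval_apply]
  have hexe := hex m (2 * i) (by omega)
  have h1 := congrArg (fun p => aeval (fun k => aeval (S2 i) (xToPQ (m + 1) k)) p) hexe
  rw [comp_aeval_apply, comp_aeval_apply] at h1
  calc aeval (fun k => aeval (S2 i) (xToPQ (m + 1) k)) (f (m + 1))
      = aeval (fun k => aeval (fun k => aeval (S2 i) (xToPQ (m + 1) k))
          (if k = 2 * i + 1 then (X (2 * i) : MvPolynomial ℕ ℚ) else X k))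
          (f (m + 1)) := by
        refine aeval_funext _ fun k => ?_
        by_cases hk : k = 2 * i + 1
        · rw [if_pos hk, aeval_X, hk]
          rw [hc2O m i i, hc2E m i i]
          congr 1
          rw [Finset.sum_eq_sum_Ico_succ_bot (show i < m + 2 by omega), if_pos rfl, zero_add]
        · rw [if_neg hk, aeval_X]
    _ = aeval (fun k => aeval (fun k => aeval (S2 i) (xToPQ (m + 1) k))
          (if k < 2 * i then (X k : MvPolynomial ℕ ℚ) else X (k + 2))) (f m) := h1
    _ = aeval (fun k => aeval (T2 i) (xToPQ m k)) (f m) := by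
        refine aeval_funext _ fun k => ?_
        obtain ⟨a, rfl | rfl⟩ : ∃ a, k = 2 * a ∨ k = 2 * a + 1 := ⟨k / 2, by omega⟩
        · rcases Nat.lt_or_ge a i with hai | hai
          · rw [if_pos (by omega), aeval_X]
            rw [hc2E m i a, hd2E m i a]
            congr 1
            · rw [sum_uq_split (fun j => (X (Sum.inr j) : MvPolynomial (ℕ ⊕ ℕ) ℚ)) hai him]
            · rw [show m + 2 = m + 1 + 1 from rfl,
                sum_ite_zero_split (fun j => (X (Sum.inl j) : MvPolynomial (ℕ ⊕ ℕ) ℚ))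
                  hai.le (by omega),
                sum_sh_split (fun j => (X (Sum.inl j) : MvPolynomial (ℕ ⊕ ℕ) ℚ))
                  hai.le (by omega)]
          · rw [if_neg (by omega), aeval_X]
            rw [show 2 * a + 2 = 2 * (a + 1) from by ring, hc2E m i (a + 1), hd2E m i a]
            congr 1
            · rw [sum_uq_ge (fun j => (X (Sum.inr j) : MvPolynomial (ℕ ⊕ ℕ) ℚ)) m hai]
            · rw [show m + 2 = m + 1 + 1 from rfl,
                sum_ite_zero_ge (fun j => (X (Sum.inl j) : MvPolynomial (ℕ ⊕ ℕ) ℚ))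
                  (m + 1 + 1) (by omega),
                sum_sh_ge (fun j => (X (Sum.inl j) : MvPolynomial (ℕ ⊕ ℕ) ℚ)) (m + 1) hai]
        · rcases Nat.lt_or_ge a i with hai | hai
          · rw [if_pos (by omega), aeval_X]
            rw [hc2O m i a, hd2O m i a]
            congr 1
            · rw [sum_uq_split (fun j => (X (Sum.inr j) : MvPolynomial (ℕ ⊕ ℕ) ℚ)) hai him]
            · rw [show m + 2 = m + 1 + 1 from rfl,
                sum_ite_zero_split (fun j => (X (Sum.inl j) : MvPolynomial (ℕ ⊕ ℕ) ℚ))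
                  (by omega : a + 1 ≤ i) (by omega),
                sum_sh_split (fun j => (X (Sum.inl j) : MvPolynomial (ℕ ⊕ ℕ) ℚ))
                  (by omega : a + 1 ≤ i) (by omega)]
          · rw [if_neg (by omega), aeval_X]
            rw [show 2 * a + 1 + 2 = 2 * (a + 1) + 1 from by ring, hc2O m i (a + 1), hd2O m i a]
            congr 1
            · rw [sum_uq_ge (fun j => (X (Sum.inr j) : MvPolynomial (ℕ ⊕ ℕ) ℚ)) m hai]
            · rw [show m + 2 = m + 1 + 1 from rfl,
                sum_ite_zero_ge (fun j => (X (Sum.inl j) : MvPolynomial (ℕ ⊕ ℕ) ℚ))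
                  (m + 1 + 1) (by omega),
                sum_sh_ge (fun j => (X (Sum.inl j) : MvPolynomial (ℕ ⊕ ℕ) ℚ)) (m + 1)
                  (by omega)]
/-- If `f` is a stable x-family satisfying (E_x), then the family
`h_m` obtained from `f_{2m+1}` by the inverse of the substitution (⋆) is a stable
pq-family satisfying (E_pq). -/
theorem stmt3 (f : ℕ → MvPolynomial ℕ ℚ) (hst : IsStableX f) (hex : SatisfiesEx f) :
    IsStablePQ (fun m => aeval (xToPQ m) (f m)) ∧
      SatisfiesEpq (fun m => aeval (xToPQ m) (f m)) := by
  refine ⟨⟨fun m => vars_part f m, fun m => stab_lemma f hst m⟩, fun m i him => ?_⟩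
  exact ⟨epq1 f hex m i him, epq2 f hex m i him⟩
end
end

section
/- Let h = (h_m)_{m≥0} be a stable pq-family satisfying equations (E_pq). For each m ≥ 0 let f_{2m+1} ∈ ℚ[x₁,…,x_{2m+1}] be obtained from h_m by the substitution (⋆), i.e. by setting p_i := x_{2i−1} − x_{2i} (1 ≤ i ≤ m), q_i := x_{2i} − x_{2i+1} (1 ≤ i ≤ m) and p_{m+1} := x_{2m+1}. Then (f_{2m+1})_{m≥0} is a stable x-family satisfying equation (E_x). -/
open MvPolynomial
open scoped Classical

noncomputable section

section Stmt4Aux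

lemma aeval_congr_on_vars {σ τ : Type} (g₁ g₂ : σ → MvPolynomial τ ℚ) (p : MvPolynomial σ ℚ)
    (hg : ∀ i ∈ p.vars, g₁ i = g₂ i) : aeval g₁ p = aeval g₂ p := by
  have hp : p ∈ supported ℚ (↑p.vars : Set σ) := mem_supported_vars p
  have hle : supported ℚ (↑p.vars : Set σ) ≤ AlgHom.equalizer (aeval g₁) (aeval g₂) := by
    rw [supported_eq_adjoin_X]
    apply Algebra.adjoin_le
    rintro _ ⟨i, hi, rfl⟩
    simp only [SetLike.mem_coe, AlgHom.mem_equalizer, aeval_X]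
    exact hg i (by simpa using hi)
  exact hle hp

lemma vars_aeval_subset {σ τ : Type} (g : σ → MvPolynomial τ ℚ) (p : MvPolynomial σ ℚ)
    (T : Set τ) (hg : ∀ i ∈ p.vars, ↑(g i).vars ⊆ T) : ↑(aeval g p).vars ⊆ T := by
  rw [← mem_supported]
  have hp : p ∈ supported ℚ (↑p.vars : Set σ) := mem_supported_vars p
  have hle : supported ℚ (↑p.vars : Set σ) ≤ (supported ℚ T).comap (aeval g) := by
    rw [supported_eq_adjoin_X]
    apply Algebra.adjoin_le
    rintro _ ⟨i, hi, rfl⟩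
    simp only [SetLike.mem_coe, Subalgebra.mem_comap, aeval_X, mem_supported]
    exact hg i (by simpa using hi)
  exact hle hp

lemma aeval_aeval' {σ₁ σ₂ : Type} (c₁ : σ₁ → MvPolynomial σ₂ ℚ)
    (c₂ : σ₂ → MvPolynomial ℕ ℚ) (p : MvPolynomial σ₁ ℚ) :
    aeval c₂ (aeval c₁ p) = aeval (fun v => aeval c₂ (c₁ v)) p := by
  induction p using MvPolynomial.induction_on with
  | C a => simp only [aeval_C, AlgHom.commutes]
  | add p q hp hq => simp only [map_add, hp, hq]
  | mul_X p n hp => simp only [map_mul, hp, aeval_X]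

lemma vars_X_sub_X (a b : ℕ) : ((X a - X b : MvPolynomial ℕ ℚ)).vars ⊆ {a, b} := by
  intro x hx
  have hx' := vars_sub_subset (p := (X a : MvPolynomial ℕ ℚ)) (q := X b) hx
  simp only [vars_X, Finset.mem_union, Finset.mem_singleton] at hx'
  simp only [Finset.mem_insert, Finset.mem_singleton]
  tauto

set_option maxHeartbeats 1000000 in
lemma exEven (h : ℕ → MvPolynomial (ℕ ⊕ ℕ) ℚ) (hepq : SatisfiesEpq h)
    (m t : ℕ) (ht : t ≤ m) :
    aeval (fun k => if k = 2 * t + 1 then (X (2 * t) : MvPolynomial ℕ ℚ) else X k)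
        (aeval (pqToX (m + 1)) (h (m + 1))) =
      aeval (fun k => if k < 2 * t then (X k : MvPolynomial ℕ ℚ) else X (k + 2))
        (aeval (pqToX m) (h m)) := by
  obtain ⟨-, hp0⟩ := hepq m t ht
  set τ : ℕ → MvPolynomial ℕ ℚ := fun k => if k = 2 * t + 1 then X (2 * t) else X k with hτ
  set μ : ℕ → MvPolynomial ℕ ℚ := fun k => if k < 2 * t then X k else X (k + 2) with hμ
  set g : (ℕ ⊕ ℕ) → MvPolynomial ℕ ℚ := fun v => aeval τ (pqToX (m + 1) v) with hg
  have hA : (fun v => aeval τ (pqToX (m + 1) v))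
      = fun v => aeval g (Sum.elim
          (fun j => if j = t then 0 else (X (Sum.inl j) : MvPolynomial (ℕ ⊕ ℕ) ℚ))
          (fun j => X (Sum.inr j)) v) := by
    funext v
    rcases v with j | j
    · by_cases hjt : j = t
      · rw [hjt]
        simp [hg, pqToX, hτ, if_neg (show ¬ t = m + 1 by omega)]
      · simp [hjt, hg]
    · simp [hg]
  have hB : (fun v => aeval g (Sum.elim
        (fun j => if j < t then (X (Sum.inl j) : MvPolynomial (ℕ ⊕ ℕ) ℚ)
          else X (Sum.inl (j + 1)))
        (fun j => if j + 1 < t then X (Sum.inr j)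
          else if j + 1 = t then X (Sum.inr j) + X (Sum.inr (j + 1))
          else X (Sum.inr (j + 1))) v)) = fun v => aeval μ (pqToX m v) := by
    funext v
    rcases v with j | j <;>
      simp only [Sum.elim_inl, Sum.elim_inr] <;>
      (try split_ifs) <;>
      (try simp only [hg, pqToX, Sum.elim_inl, Sum.elim_inr, map_add, map_sub, aeval_X, hτ, hμ,
        mul_add, mul_one, add_assoc, Nat.reduceAdd]) <;>
      (try split_ifs) <;>
      (try simp only [hg, pqToX, Sum.elim_inl, Sum.elim_inr, map_add, map_sub, aeval_X, hτ, hμ,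
        mul_add, mul_one, add_assoc, Nat.reduceAdd]) <;>
      (try split_ifs) <;>
      first
        | rfl
        | omega
        | ring1
        | (rw [show (2 * t : ℕ) = 2 * j + 2 by omega]; first | rfl | ring1)
  calc aeval τ (aeval (pqToX (m + 1)) (h (m + 1)))
      = aeval (fun v => aeval τ (pqToX (m + 1) v)) (h (m + 1)) := aeval_aeval' _ _ _
    _ = aeval g (aeval (Sum.elim
          (fun j => if j = t then 0 else (X (Sum.inl j) : MvPolynomial (ℕ ⊕ ℕ) ℚ))
          (fun j => X (Sum.inr j))) (h (m + 1))) := by rw [hA, ← aeval_aeval']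
    _ = aeval g (aeval (Sum.elim
          (fun j => if j < t then (X (Sum.inl j) : MvPolynomial (ℕ ⊕ ℕ) ℚ)
            else X (Sum.inl (j + 1)))
          (fun j => if j + 1 < t then X (Sum.inr j)
            else if j + 1 = t then X (Sum.inr j) + X (Sum.inr (j + 1))
            else X (Sum.inr (j + 1)))) (h m)) := by rw [hp0]
    _ = aeval μ (aeval (pqToX m) (h m)) := by rw [aeval_aeval', hB, ← aeval_aeval']

set_option maxHeartbeats 1000000 in
lemma exOdd (h : ℕ → MvPolynomial (ℕ ⊕ ℕ) ℚ) (hepq : SatisfiesEpq h)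
    (m t : ℕ) (ht : t ≤ m) :
    aeval (fun k => if k = 2 * t + 2 then (X (2 * t + 1) : MvPolynomial ℕ ℚ) else X k)
        (aeval (pqToX (m + 1)) (h (m + 1))) =
      aeval (fun k => if k < 2 * t + 1 then (X k : MvPolynomial ℕ ℚ) else X (k + 2))
        (aeval (pqToX m) (h m)) := by
  obtain ⟨hq0, -⟩ := hepq m t ht
  set τ : ℕ → MvPolynomial ℕ ℚ := fun k => if k = 2 * t + 2 then X (2 * t + 1) else X k with hτ
  set μ : ℕ → MvPolynomial ℕ ℚ := fun k => if k < 2 * t + 1 then X k else X (k + 2) with hμ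
  set g : (ℕ ⊕ ℕ) → MvPolynomial ℕ ℚ := fun v => aeval τ (pqToX (m + 1) v) with hg
  have hA : (fun v => aeval τ (pqToX (m + 1) v))
      = fun v => aeval g (Sum.elim
          (fun j => (X (Sum.inl j) : MvPolynomial (ℕ ⊕ ℕ) ℚ))
          (fun j => if j = t then 0 else X (Sum.inr j)) v) := by
    funext v
    rcases v with j | j
    · simp [hg]
    · by_cases hjt : j = t
      · rw [hjt]
        simp [hg, pqToX, hτ]
      · simp [hjt, hg]
  have hB : (fun v => aeval g (Sum.elim
        (fun j => if j < t then (X (Sum.inl j) : MvPolynomial (ℕ ⊕ ℕ) ℚ)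
          else if j = t then X (Sum.inl t) + X (Sum.inl (t + 1)) else X (Sum.inl (j + 1)))
        (fun j => if j < t then X (Sum.inr j) else X (Sum.inr (j + 1))) v))
      = fun v => aeval μ (pqToX m v) := by
    funext v
    rcases v with j | j <;>
      simp only [Sum.elim_inl, Sum.elim_inr] <;>
      (try split_ifs) <;>
      (try simp only [hg, pqToX, Sum.elim_inl, Sum.elim_inr, map_add, map_sub, aeval_X, hτ, hμ,
        mul_add, mul_one, add_assoc, Nat.reduceAdd]) <;>
      (try split_ifs) <;>
      (try simp only [hg, pqToX, Sum.elim_inl, Sum.elim_inr, map_add, map_sub, aeval_X, hτ, hμ,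
        mul_add, mul_one, add_assoc, Nat.reduceAdd]) <;>
      (try split_ifs) <;>
      first
        | rfl
        | omega
        | ring1
        | (rw [show (2 * t + 1 : ℕ) = 2 * j + 1 by omega]; first | rfl | ring1)
        | (rw [show (2 * t + 1 : ℕ) = 2 * j + 1 by omega,
               show (2 * m : ℕ) = 2 * j by omega]; first | rfl | ring1)
        | (rw [show (2 * t : ℕ) = 2 * j by omega]; first | rfl | ring1)
        | (rw [show (2 * t : ℕ) = 2 * j by omega,
               show (2 * m : ℕ) = 2 * j by omega]; first | rfl | ring1)
  calc aeval τ (aeval (pqToX (m + 1)) (h (m + 1)))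
      = aeval (fun v => aeval τ (pqToX (m + 1) v)) (h (m + 1)) := aeval_aeval' _ _ _
    _ = aeval g (aeval (Sum.elim
          (fun j => (X (Sum.inl j) : MvPolynomial (ℕ ⊕ ℕ) ℚ))
          (fun j => if j = t then 0 else X (Sum.inr j))) (h (m + 1))) := by
        rw [hA, ← aeval_aeval']
    _ = aeval g (aeval (Sum.elim
          (fun j => if j < t then (X (Sum.inl j) : MvPolynomial (ℕ ⊕ ℕ) ℚ)
            else if j = t then X (Sum.inl t) + X (Sum.inl (t + 1)) else X (Sum.inl (j + 1)))
          (fun j => if j < t then X (Sum.inr j) else X (Sum.inr (j + 1)))) (h m)) := by rw [hq0]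
    _ = aeval μ (aeval (pqToX m) (h m)) := by rw [aeval_aeval', hB, ← aeval_aeval']

end Stmt4Aux

/-- If `h` is a stable pq-family satisfying (E_pq), then the family
`f_{2m+1}` obtained from `h_m` by the substitution (⋆) is a stable x-family
satisfying (E_x). -/
theorem stmt4 (h : ℕ → MvPolynomial (ℕ ⊕ ℕ) ℚ) (hst : IsStablePQ h)
    (hepq : SatisfiesEpq h) :
    IsStableX (fun m => aeval (pqToX m) (h m)) ∧
      SatisfiesEx (fun m => aeval (pqToX m) (h m)) := by
  obtain ⟨hvars, hstab⟩ := hst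
  refine ⟨⟨?_, ?_⟩, ?_⟩
  · -- variable bound
    intro m
    refine Finset.coe_subset.mp ?_
    apply vars_aeval_subset
    intro i hi
    have hmem := hvars m hi
    simp only [Finset.mem_union, Finset.mem_image, Finset.mem_range] at hmem
    rcases i with j | j
    · have hj : j < m + 1 := by
        rcases hmem with ⟨a, ha, he⟩ | ⟨a, ha, he⟩
        · have : a = j := by injection he
          omega
        · simp at he
      by_cases hjm : j = m
      · subst hjm
        simp only [pqToX, Sum.elim_inl, if_pos rfl, vars_X]
        intro x hx
        simp only [Finset.coe_range, Set.mem_Iio]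
        have hx2 : x ∈ ({2 * j} : Finset ℕ) := by simpa using hx
        simp only [Finset.mem_singleton] at hx2
        omega
      · simp only [pqToX, Sum.elim_inl, if_neg hjm]
        intro x hx
        have hx' := vars_X_sub_X _ _ hx
        simp only [Finset.mem_insert, Finset.mem_singleton] at hx'
        simp only [Finset.coe_range, Set.mem_Iio]
        omega
    · have hj : j < m := by
        rcases hmem with ⟨a, ha, he⟩ | ⟨a, ha, he⟩
        · simp at he
        · have : a = j := by injection he
          omega
      simp only [pqToX, Sum.elim_inr]
      intro x hx
      have hx' := vars_X_sub_X _ _ hx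
      simp only [Finset.mem_insert, Finset.mem_singleton] at hx'
      simp only [Finset.coe_range, Set.mem_Iio]
      omega
  · -- stability
    intro m
    show aeval (fun k => if k < 2 * m + 1 then (X k : MvPolynomial ℕ ℚ) else 0)
        (aeval (pqToX (m + 1)) (h (m + 1))) = aeval (pqToX m) (h m)
    rw [aeval_aeval', ← hstab m, aeval_aeval']
    apply aeval_congr_on_vars
    intro v hv'
    have hmem := hvars (m + 1) hv'
    simp only [Finset.mem_union, Finset.mem_image, Finset.mem_range] at hmem
    rcases v with j | j
    · have hj : j < m + 2 := by
        rcases hmem with ⟨a, ha, he⟩ | ⟨a, ha, he⟩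
        · have : a = j := by injection he
          omega
        · simp at he
      simp only [Sum.elim_inl] <;>
        (try split_ifs) <;>
        (try simp only [pqToX, Sum.elim_inl, Sum.elim_inr, map_sub, map_zero, aeval_X,
          mul_add, mul_one, add_assoc, Nat.reduceAdd]) <;>
        (try split_ifs) <;>
        (try simp only [pqToX, Sum.elim_inl, Sum.elim_inr, map_sub, map_zero, aeval_X,
          mul_add, mul_one, add_assoc, Nat.reduceAdd]) <;>
        (try split_ifs) <;>
        first
          | rfl
          | omega
          | ring1
          | (rw [show (2 * m : ℕ) = 2 * j by omega]; first | rfl | ring1)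
    · have hj : j < m + 1 := by
        rcases hmem with ⟨a, ha, he⟩ | ⟨a, ha, he⟩
        · simp at he
        · have : a = j := by injection he
          omega
      simp only [Sum.elim_inr] <;>
        (try split_ifs) <;>
        (try simp only [pqToX, Sum.elim_inl, Sum.elim_inr, map_sub, map_zero, aeval_X,
          mul_add, mul_one, add_assoc, Nat.reduceAdd]) <;>
        (try split_ifs) <;>
        (try simp only [pqToX, Sum.elim_inl, Sum.elim_inr, map_sub, map_zero, aeval_X,
          mul_add, mul_one, add_assoc, Nat.reduceAdd]) <;>
        (try split_ifs) <;>
        first | rfl | omega | ring1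
  · -- (E_x)
    intro m i hi
    rcases Nat.even_or_odd i with he | ho
    · obtain ⟨t, rfl⟩ := he
      rw [show t + t = 2 * t by ring]
      exact exEven h hepq m t (by omega)
    · obtain ⟨t, rfl⟩ := ho
      exact exOdd h hepq m t (by omega)
end
end

section
/- Let P be a finite ranked poset. For each m ≥ 0 let f_{2m+1} ∈ ℚ[x₁,…,x_{2m+1}] be obtained from N_P^(m) by the substitution (⋆), i.e. by setting p_i := x_{2i−1} − x_{2i} (1 ≤ i ≤ m), q_i := x_{2i} − x_{2i+1} (1 ≤ i ≤ m) and p_{m+1} := x_{2m+1}. Then (f_{2m+1})_{m≥0} is a stable x-family satisfying equation (E_x). -/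
open MvPolynomial
open scoped Classical

noncomputable section

section Stmt5Aux

variable {α : Type} [Fintype α] [PartialOrder α] {R : Type} [CommRing R]

/-- The generic sum attached to a poset, a bound `m`, and factor values `p q`. -/
def Tsum (ht : α → ℕ) (m : ℕ) (p q : ℕ → R) : R :=
  ∑ r : α → Fin (m + 1),
    if OrderCond ht r ∧ ∀ v, Odd (ht v) → (r v : ℕ) < m then
      ∏ v : α, if Even (ht v) then p (r v : ℕ) else q (r v : ℕ)
    else 0

lemma Xeq {a b : ℕ} (h : a = b) : (X a : MvPolynomial ℕ ℚ) = X b := by rw [h]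

lemma Xsub {a b c d : ℕ} (h1 : a = c) (h2 : b = d) :
    (X a - X b : MvPolynomial ℕ ℚ) = X c - X d := by rw [h1, h2]

lemma aeval_NP (ht : α → ℕ) (m : ℕ) (g : ℕ ⊕ ℕ → MvPolynomial ℕ ℚ) :
    aeval g (NP α ht m) = Tsum ht m (fun j => g (Sum.inl j)) (fun j => g (Sum.inr j)) := by
  simp only [NP, Tsum, map_sum, apply_ite (aeval g), map_zero, map_prod, aeval_X]

lemma map_Tsum (φ : MvPolynomial ℕ ℚ →ₐ[ℚ] MvPolynomial ℕ ℚ) (ht : α → ℕ) (m : ℕ)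
    (p q : ℕ → MvPolynomial ℕ ℚ) :
    φ (Tsum ht m p q) = Tsum ht m (fun j => φ (p j)) (fun j => φ (q j)) := by
  simp only [Tsum, map_sum, apply_ite φ, map_zero, map_prod]

lemma Tsum_congr (ht : α → ℕ) (m : ℕ) (p q p' q' : ℕ → R)
    (hp : ∀ j ≤ m, p j = p' j) (hq : ∀ j < m, q j = q' j) :
    Tsum ht m p q = Tsum ht m p' q' := by
  unfold Tsum
  refine Finset.sum_congr rfl fun r _ => ?_
  by_cases hc : OrderCond ht r ∧ ∀ v, Odd (ht v) → (r v : ℕ) < m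
  · rw [if_pos hc, if_pos hc]
    refine Finset.prod_congr rfl fun v _ => ?_
    by_cases hev : Even (ht v)
    · rw [if_pos hev, if_pos hev, hp _ (Nat.lt_succ_iff.mp (r v).isLt)]
    · have hov : Odd (ht v) := Nat.odd_iff.mpr (by
        rcases Nat.even_or_odd (ht v) with h | h
        · exact absurd h hev
        · exact Nat.odd_iff.mp h)
      rw [if_neg hev, if_neg hev, hq _ (hc.2 v hov)]
  · rw [if_neg hc, if_neg hc]

/-- The master transfer lemma. -/
lemma skel (ht : α → ℕ) (m : ℕ) (W W' : α → ℕ → R)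
    (L : (α → Fin (m + 1)) → α → Finset (Fin (m + 2)))
    (cl : (α → Fin (m + 2)) → α → Fin (m + 1))
    (good : (α → Fin (m + 2)) → Prop)
    (h1 : ∀ (s : α → Fin (m + 1)) (v : α),
        (∑ b ∈ L s v, W v (b : ℕ)) = W' v (s v : ℕ))
    (h2 : ∀ (s : α → Fin (m + 1)) (r : α → Fin (m + 2)),
        ((OrderCond ht s ∧ ∀ v, Odd (ht v) → (s v : ℕ) < m) ∧ ∀ v, r v ∈ L s v) ↔
          (good r ∧ s = cl r))
    (h3 : ∀ r : α → Fin (m + 2), (OrderCond ht r ∧ ∀ v, Odd (ht v) → (r v : ℕ) < m + 1) →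
        ¬ good r → (∏ v : α, W v (r v : ℕ)) = 0)
    (h4 : ∀ r : α → Fin (m + 2), good r →
        (OrderCond ht r ∧ ∀ v, Odd (ht v) → (r v : ℕ) < m + 1)) :
    (∑ r : α → Fin (m + 2),
        if OrderCond ht r ∧ ∀ v, Odd (ht v) → (r v : ℕ) < m + 1 then
          ∏ v : α, W v (r v : ℕ) else 0)
      = ∑ s : α → Fin (m + 1),
          if OrderCond ht s ∧ ∀ v, Odd (ht v) → (s v : ℕ) < m then
            ∏ v : α, W' v (s v : ℕ) else 0 := by
  have step1 : ∀ s : α → Fin (m + 1),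
      (if OrderCond ht s ∧ ∀ v, Odd (ht v) → (s v : ℕ) < m then
          ∏ v : α, W' v (s v : ℕ) else 0)
      = ∑ r : α → Fin (m + 2),
          if ((OrderCond ht s ∧ ∀ v, Odd (ht v) → (s v : ℕ) < m) ∧ ∀ v, r v ∈ L s v) then
            ∏ v : α, W v (r v : ℕ) else 0 := by
    intro s
    by_cases hc : OrderCond ht s ∧ ∀ v, Odd (ht v) → (s v : ℕ) < m
    · rw [if_pos hc]
      have e1 : ∏ v : α, W' v (s v : ℕ) = ∏ v : α, ∑ b ∈ L s v, W v (b : ℕ) :=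
        Finset.prod_congr rfl fun v _ => (h1 s v).symm
      rw [e1, Finset.prod_univ_sum]
      rw [show Fintype.piFinset (L s) = Finset.univ ∩ Fintype.piFinset (L s) by
        rw [Finset.univ_inter]]
      rw [← Finset.sum_ite_mem]
      refine Finset.sum_congr rfl fun r _ => ?_
      congr 1
      simp only [Fintype.mem_piFinset, eq_iff_iff]
      exact ⟨fun h => ⟨hc, h⟩, fun h => h.2⟩
    · rw [if_neg hc]
      symm
      refine Finset.sum_eq_zero fun r _ => ?_
      rw [if_neg (fun h => hc h.1)]
  have main : (∑ r : α → Fin (m + 2),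
      if OrderCond ht r ∧ ∀ v, Odd (ht v) → (r v : ℕ) < m + 1 then
        ∏ v : α, W v (r v : ℕ) else 0)
      = ∑ r : α → Fin (m + 2), if good r then ∏ v : α, W v (r v : ℕ) else 0 := by
    refine Finset.sum_congr rfl fun r _ => ?_
    by_cases hg : good r
    · rw [if_pos hg, if_pos (h4 r hg)]
    · rw [if_neg hg]
      by_cases hcnd : OrderCond ht r ∧ ∀ v, Odd (ht v) → (r v : ℕ) < m + 1
      · rw [if_pos hcnd]; exact h3 r hcnd hg
      · rw [if_neg hcnd]
  rw [main]
  symm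
  calc (∑ s : α → Fin (m + 1),
      if OrderCond ht s ∧ ∀ v, Odd (ht v) → (s v : ℕ) < m then
        ∏ v : α, W' v (s v : ℕ) else 0)
      = ∑ s : α → Fin (m + 1), ∑ r : α → Fin (m + 2),
          if ((OrderCond ht s ∧ ∀ v, Odd (ht v) → (s v : ℕ) < m) ∧ ∀ v, r v ∈ L s v) then
            ∏ v : α, W v (r v : ℕ) else 0 := Finset.sum_congr rfl fun s _ => step1 s
    _ = ∑ r : α → Fin (m + 2), ∑ s : α → Fin (m + 1),
          if ((OrderCond ht s ∧ ∀ v, Odd (ht v) → (s v : ℕ) < m) ∧ ∀ v, r v ∈ L s v) then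
            ∏ v : α, W v (r v : ℕ) else 0 := Finset.sum_comm
    _ = ∑ r : α → Fin (m + 2), ∑ s : α → Fin (m + 1),
          if (good r ∧ s = cl r) then ∏ v : α, W v (r v : ℕ) else 0 := by
          refine Finset.sum_congr rfl fun r _ => Finset.sum_congr rfl fun s _ => ?_
          congr 1
          rw [eq_iff_iff]
          exact h2 s r
    _ = ∑ r : α → Fin (m + 2), if good r then ∏ v : α, W v (r v : ℕ) else 0 := by
          refine Finset.sum_congr rfl fun r _ => ?_
          by_cases hg : good r
          · simp only [hg, true_and, if_true]
            rw [Finset.sum_ite_eq' Finset.univ (cl r) (fun _ => ∏ v : α, W v (r v : ℕ)),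
              if_pos (Finset.mem_univ _)]
          · simp only [hg, false_and, if_false, if_neg hg, Finset.sum_const_zero]

lemma not_even_of_odd {n : ℕ} (h : Odd n) : ¬ Even n := by
  simp [Nat.even_iff, Nat.odd_iff.mp h]

lemma odd_of_not_even {n : ℕ} (h : ¬ Even n) : Odd n := by
  rcases Nat.even_or_odd n with h' | h'
  · exact absurd h' h
  · exact h'

lemma odd_label_pos {ht : α → ℕ} (hrk : IsRanked ht) {N : ℕ} {r : α → Fin N}
    (hoc : OrderCond ht r) (hE : ∀ u, Even (ht u) → (r u : ℕ) ≠ 0)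
    {v : α} (hodd : Odd (ht v)) : (r v : ℕ) ≠ 0 := by
  have hnm : ¬ IsMin v := by
    intro hm
    have h0 := hrk.1 v hm
    rw [h0] at hodd
    simp [Nat.odd_iff] at hodd
  obtain ⟨u, hcov⟩ := exists_covBy_of_wellFoundedGT hnm
  have hh := hrk.2 u v hcov
  have hevu : Even (ht u) := by
    rw [hh] at hodd
    rcases Nat.even_or_odd (ht u) with h | h
    · exact h
    · exact absurd (Odd.add_one h) (not_even_of_odd hodd)
  have hle := hoc.1 u v hcov.le
  rw [Fin.le_def] at hle
  have := hE u hevu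
  omega

/-- Transfer lemma for killing the top variables. -/
lemma Tsum_A (ht : α → ℕ) (m : ℕ) (p q : ℕ → R) (hp : p (m + 1) = 0) (hq : q m = 0) :
    Tsum ht (m + 1) p q = Tsum ht m p q := by
  unfold Tsum
  refine skel ht m (fun v n => if Even (ht v) then p n else q n)
    (fun v n => if Even (ht v) then p n else q n)
    (fun s v => {(s v).castSucc})
    (fun r v => ⟨min (r v : ℕ) m, by omega⟩)
    (fun r => (OrderCond ht r ∧ ∀ v, Odd (ht v) → (r v : ℕ) < m + 1) ∧
      ∀ v, (Even (ht v) → (r v : ℕ) ≤ m) ∧ (Odd (ht v) → (r v : ℕ) < m)) ?_ ?_ ?_ ?_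
  · intro s v
    try dsimp only
    rw [Finset.sum_singleton, Fin.coe_castSucc]
  · intro s r
    try dsimp only
    constructor
    · rintro ⟨⟨hsoc, hsbd⟩, hmem⟩
      have hval : ∀ v, (r v : ℕ) = (s v : ℕ) := fun v => by
        have h := hmem v
        rw [Finset.mem_singleton] at h
        rw [h, Fin.coe_castSucc]
      have hle : ∀ v, (r v : ℕ) ≤ m := fun v => by
        rw [hval v]; exact Nat.lt_succ_iff.mp (s v).isLt
      refine ⟨⟨⟨⟨fun x y hxy => ?_, fun x y hxy ho => ?_⟩, fun v hv => ?_⟩,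
        fun v => ⟨fun _ => hle v, fun hv => ?_⟩⟩, ?_⟩
      · have h := hsoc.1 x y hxy
        rw [Fin.le_def] at h ⊢
        rw [hval x, hval y]; exact h
      · have h := hsoc.2 x y hxy ho
        rw [Fin.lt_def] at h ⊢
        rw [hval x, hval y]; exact h
      · rw [hval v]; exact lt_trans (hsbd v hv) (Nat.lt_succ_self m)
      · rw [hval v]; exact hsbd v hv
      · funext v
        apply Fin.ext
        have h1 := hle v
        have h2 := hval v
        show (s v : ℕ) = min (r v : ℕ) m
        omega
    · rintro ⟨⟨⟨hroc, hrbd⟩, hbb⟩, rfl⟩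
      have hle : ∀ v, (r v : ℕ) ≤ m := fun v => by
        rcases Nat.even_or_odd (ht v) with h | h
        · exact (hbb v).1 h
        · exact le_of_lt ((hbb v).2 h)
      refine ⟨⟨⟨fun x y hxy => ?_, fun x y hxy ho => ?_⟩, fun v hv => ?_⟩, fun v => ?_⟩
      · have h := hroc.1 x y hxy
        rw [Fin.le_def] at h ⊢
        have := hle x; have := hle y
        try dsimp only
        omega
      · have h := hroc.2 x y hxy ho
        rw [Fin.lt_def] at h ⊢
        have := hle x; have := hle y
        try dsimp only
        omega
      · have h := (hbb v).2 hv
        try dsimp only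
        omega
      · rw [Finset.mem_singleton, Fin.ext_iff, Fin.coe_castSucc]
        have := hle v
        try dsimp only
        omega
  · intro r hcnd hng
    have hex : ∃ v, (Even (ht v) ∧ (r v : ℕ) = m + 1) ∨ (Odd (ht v) ∧ (r v : ℕ) = m) := by
      by_contra hno
      push_neg at hno
      refine hng ⟨hcnd, fun v => ⟨fun hev => ?_, fun hod => ?_⟩⟩
      · have h1 := (hno v).1 hev
        have := (r v).isLt
        omega
      · have h2 := (hno v).2 hod
        have := hcnd.2 v hod
        omega
    obtain ⟨v, hv⟩ := hex
    refine Finset.prod_eq_zero (Finset.mem_univ v) ?_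
    try dsimp only
    rcases hv with ⟨hev, he⟩ | ⟨hod, he⟩
    · rw [if_pos hev, he, hp]
    · rw [if_neg (not_even_of_odd hod), he, hq]
  · exact fun r hg => And.left hg

/-- Transfer lemma for setting `q t := 0`. -/
lemma Tsum_Bq (ht : α → ℕ) (hrk : IsRanked ht) (m t : ℕ) (htm : t ≤ m)
    (p q : ℕ → R) (hq : q t = 0) :
    Tsum ht (m + 1) p q = Tsum ht m
      (fun j => if j < t then p j else if j = t then p t + p (t + 1) else p (j + 1))
      (fun j => if j < t then q j else q (j + 1)) := by
  unfold Tsum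
  refine skel ht m (fun v n => if Even (ht v) then p n else q n)
    (fun v n => if Even (ht v) then
        (if n < t then p n else if n = t then p t + p (t + 1) else p (n + 1))
      else (if n < t then q n else q (n + 1)))
    (fun s v => if (s v : ℕ) < t then {(s v).castSucc}
      else if Even (ht v) ∧ (s v : ℕ) = t then {(s v).castSucc, (s v).succ}
      else {(s v).succ})
    (fun r v => ⟨if (r v : ℕ) ≤ t then (r v : ℕ) else (r v : ℕ) - 1, by
      have := (r v).isLt; split_ifs <;> omega⟩)
    (fun r => (OrderCond ht r ∧ ∀ v, Odd (ht v) → (r v : ℕ) < m + 1) ∧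
      ∀ v, Odd (ht v) → (r v : ℕ) ≠ t) ?_ ?_ ?_ ?_
  · intro s v
    try dsimp only
    by_cases hev : Even (ht v)
    · by_cases h1 : (s v : ℕ) < t
      · rw [if_pos h1, Finset.sum_singleton, Fin.coe_castSucc, if_pos hev, if_pos hev, if_pos h1]
      · by_cases h2 : (s v : ℕ) = t
        · rw [if_neg h1, if_pos ⟨hev, h2⟩]
          have hne : (s v).castSucc ≠ (s v).succ := by
            rw [Ne, Fin.ext_iff, Fin.coe_castSucc, Fin.val_succ]; omega
          rw [Finset.sum_pair hne, Fin.coe_castSucc, Fin.val_succ, if_pos hev, if_pos hev,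
            if_pos hev, if_neg h1, if_pos h2, h2]
        · rw [if_neg h1, if_neg (fun hc => h2 hc.2), Finset.sum_singleton, Fin.val_succ,
            if_pos hev, if_pos hev, if_neg h1, if_neg h2]
    · by_cases h1 : (s v : ℕ) < t
      · rw [if_pos h1, Finset.sum_singleton, Fin.coe_castSucc, if_neg hev, if_neg hev, if_pos h1]
      · rw [if_neg h1, if_neg (fun hc => hev hc.1), Finset.sum_singleton, Fin.val_succ,
          if_neg hev, if_neg hev, if_neg h1]
  · intro s r
    try dsimp only
    constructor
    · rintro ⟨⟨hsoc, hsbd⟩, hmem⟩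
      have hpt : ∀ v, ((s v : ℕ) = if (r v : ℕ) ≤ t then (r v : ℕ) else (r v : ℕ) - 1) ∧
          (Odd (ht v) → (r v : ℕ) ≠ t) := by
        intro v
        have h := hmem v
        split_ifs at h with h1 h2
        · rw [Finset.mem_singleton, Fin.ext_iff, Fin.coe_castSucc] at h
          exact ⟨by split_ifs <;> omega, fun _ => by omega⟩
        · rw [Finset.mem_insert, Finset.mem_singleton, Fin.ext_iff, Fin.ext_iff,
            Fin.coe_castSucc, Fin.val_succ] at h
          refine ⟨by rcases h with h | h <;> split_ifs <;> omega,
            fun hodd => absurd h2.1 (not_even_of_odd hodd)⟩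
        · rw [Finset.mem_singleton, Fin.ext_iff, Fin.val_succ] at h
          by_cases hev : Even (ht v)
          · have hne : (s v : ℕ) ≠ t := fun hh => h2 ⟨hev, hh⟩
            exact ⟨by split_ifs <;> omega, fun hodd => absurd hev (not_even_of_odd hodd)⟩
          · exact ⟨by split_ifs <;> omega, fun _ => by omega⟩
      have hscl : ∀ v : α, (s v : ℕ) =
          if (r v : ℕ) ≤ t then (r v : ℕ) else (r v : ℕ) - 1 := fun v => (hpt v).1
      have hweak : ∀ x y : α, x ≤ y → r x ≤ r y := by
        intro x y hxy
        have hs := hsoc.1 x y hxy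
        rw [Fin.le_def] at hs ⊢
        have ex := hscl x; have ey := hscl y
        by_contra hcon
        push_neg at hcon
        have hx1 : (r x : ℕ) = t + 1 ∧ (r y : ℕ) = t := by split_ifs at ex ey <;> omega
        have hxy' : x < y := lt_of_le_of_ne hxy (by rintro rfl; omega)
        rcases Nat.even_or_odd (ht x) with hevx | hodx
        · obtain ⟨z, hcov, hzy⟩ := exists_covBy_le_of_lt hxy'
          have hhz : ht z = ht x + 1 := hrk.2 x z hcov
          have hodz : Odd (ht z) := by rw [hhz]; exact Even.add_one hevx
          rcases eq_or_lt_of_le hzy with rfl | hzy'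
          · exact (hpt z).2 hodz hx1.2
          · have l1 := hsoc.1 x z hcov.le
            have l2 := hsoc.2 z y hzy' hodz
            rw [Fin.le_def] at l1
            rw [Fin.lt_def] at l2
            have ez := hscl z
            split_ifs at ex ey ez <;> omega
        · have hlt := hsoc.2 x y hxy' hodx
          rw [Fin.lt_def] at hlt
          split_ifs at ex ey <;> omega
      have hstrict : ∀ x y : α, x < y → Odd (ht x) → r x < r y := by
        intro x y hxy hodx
        have hs := hsoc.2 x y hxy hodx
        rw [Fin.lt_def] at hs ⊢
        have ex := hscl x; have ey := hscl y
        split_ifs at ex ey <;> omega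
      have hbd : ∀ v, Odd (ht v) → (r v : ℕ) < m + 1 := by
        intro v hv
        have h := hsbd v hv
        have e := hscl v
        have hne := (hpt v).2 hv
        have := (r v).isLt
        split_ifs at e <;> omega
      exact ⟨⟨⟨⟨hweak, hstrict⟩, hbd⟩, fun v hv => (hpt v).2 hv⟩,
        funext fun v => Fin.ext (hscl v)⟩
    · rintro ⟨⟨⟨hroc, hrbd⟩, hodd⟩, rfl⟩
      refine ⟨⟨⟨fun x y hxy => ?_, fun x y hxy hodx => ?_⟩, fun v hv => ?_⟩, fun v => ?_⟩
      · have h := hroc.1 x y hxy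
        rw [Fin.le_def] at h ⊢
        try dsimp only
        split_ifs <;> omega
      · have h := hroc.2 x y hxy hodx
        have hne := hodd x hodx
        rw [Fin.lt_def] at h ⊢
        try dsimp only
        split_ifs <;> omega
      · have h := hrbd v hv
        have hne := hodd v hv
        try dsimp only
        split_ifs <;> omega
      · have hb := (r v).isLt
        by_cases hev : Even (ht v)
        · simp only [hev, true_and]
          try dsimp only
          split_ifs <;>
            simp only [Finset.mem_insert, Finset.mem_singleton, Fin.ext_iff, Fin.coe_castSucc,
              Fin.val_succ, eq_self_iff_true, true_or, or_true] <;> omega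
        · have hne : (r v : ℕ) ≠ t := hodd v (odd_of_not_even hev)
          simp only [hev, false_and, if_false]
          try dsimp only
          split_ifs <;>
            simp only [Finset.mem_singleton, Fin.ext_iff, Fin.coe_castSucc, Fin.val_succ,
              eq_self_iff_true, true_or, or_true] <;> omega
  · intro r hcnd hng
    have hex : ∃ v, Odd (ht v) ∧ (r v : ℕ) = t := by
      by_contra hno
      push_neg at hno
      exact hng ⟨hcnd, fun v hv => hno v hv⟩
    obtain ⟨v, hv, hvt⟩ := hex
    refine Finset.prod_eq_zero (Finset.mem_univ v) ?_
    try dsimp only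
    rw [if_neg (not_even_of_odd hv), hvt, hq]
  · exact fun r hg => And.left hg

/-- Transfer lemma for setting `p t := 0`. -/
lemma Tsum_Bp (ht : α → ℕ) (hrk : IsRanked ht) (m t : ℕ) (htm : t ≤ m)
    (p q : ℕ → R) (hp : p t = 0) :
    Tsum ht (m + 1) p q = Tsum ht m
      (fun j => if j < t then p j else p (j + 1))
      (fun j => if j + 1 < t then q j else if j + 1 = t then q j + q (j + 1) else q (j + 1)) := by
  unfold Tsum
  refine skel ht m (fun v n => if Even (ht v) then p n else q n)
    (fun v n => if Even (ht v) then (if n < t then p n else p (n + 1))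
      else (if n + 1 < t then q n else if n + 1 = t then q n + q (n + 1) else q (n + 1)))
    (fun s v => if ¬ Even (ht v) ∧ (s v : ℕ) + 1 = t then {(s v).castSucc, (s v).succ}
      else if (s v : ℕ) < t then {(s v).castSucc} else {(s v).succ})
    (fun r v => ⟨if (r v : ℕ) < t then (r v : ℕ) else (r v : ℕ) - 1, by
      have := (r v).isLt; split_ifs <;> omega⟩)
    (fun r => (OrderCond ht r ∧ ∀ v, Odd (ht v) → (r v : ℕ) < m + 1) ∧
      ∀ v, Even (ht v) → (r v : ℕ) ≠ t) ?_ ?_ ?_ ?_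
  · intro s v
    try dsimp only
    by_cases hev : Even (ht v)
    · rw [if_neg (fun hc => hc.1 hev), if_pos hev]
      by_cases h1 : (s v : ℕ) < t
      · rw [if_pos h1, Finset.sum_singleton, Fin.coe_castSucc, if_pos hev, if_pos h1]
      · rw [if_neg h1, Finset.sum_singleton, Fin.val_succ, if_pos hev, if_neg h1]
    · rw [if_neg hev]
      by_cases h1 : (s v : ℕ) + 1 = t
      · rw [if_pos ⟨hev, h1⟩]
        have hne : (s v).castSucc ≠ (s v).succ := by
          rw [Ne, Fin.ext_iff, Fin.coe_castSucc, Fin.val_succ]; omega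
        rw [Finset.sum_pair hne, Fin.coe_castSucc, Fin.val_succ, if_neg hev, if_neg hev,
          if_neg (by omega : ¬ (s v : ℕ) + 1 < t), if_pos h1]
      · rw [if_neg (fun hc => h1 hc.2)]
        by_cases h2 : (s v : ℕ) < t
        · rw [if_pos h2, Finset.sum_singleton, Fin.coe_castSucc, if_neg hev,
            if_pos (by omega : (s v : ℕ) + 1 < t)]
        · rw [if_neg h2, Finset.sum_singleton, Fin.val_succ, if_neg hev,
            if_neg (by omega : ¬ (s v : ℕ) + 1 < t), if_neg (by omega : ¬ (s v : ℕ) + 1 = t)]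
  · intro s r
    try dsimp only
    constructor
    · rintro ⟨⟨hsoc, hsbd⟩, hmem⟩
      have hpt : ∀ v, ((s v : ℕ) = if (r v : ℕ) < t then (r v : ℕ) else (r v : ℕ) - 1) ∧
          (Even (ht v) → (r v : ℕ) ≠ t) ∧ (t = 0 → (r v : ℕ) ≠ 0) := by
        intro v
        have h := hmem v
        split_ifs at h with h1 h2
        · rw [Finset.mem_insert, Finset.mem_singleton, Fin.ext_iff, Fin.ext_iff,
            Fin.coe_castSucc, Fin.val_succ] at h
          exact ⟨by rcases h with h | h <;> split_ifs <;> omega, fun hev => absurd hev h1.1,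
            fun h0 => by rcases h with h | h <;> omega⟩
        · rw [Finset.mem_singleton, Fin.ext_iff, Fin.coe_castSucc] at h
          exact ⟨by split_ifs <;> omega, fun _ => by omega, fun h0 => by omega⟩
        · rw [Finset.mem_singleton, Fin.ext_iff, Fin.val_succ] at h
          exact ⟨by split_ifs <;> omega, fun _ => by omega, fun h0 => by omega⟩
      have hscl : ∀ v : α, (s v : ℕ) =
          if (r v : ℕ) < t then (r v : ℕ) else (r v : ℕ) - 1 := fun v => (hpt v).1
      have hweak : ∀ x y : α, x ≤ y → r x ≤ r y := by
        intro x y hxy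
        have hs := hsoc.1 x y hxy
        rw [Fin.le_def] at hs ⊢
        have ex := hscl x; have ey := hscl y
        by_contra hcon
        push_neg at hcon
        have hx0 := (hpt x).2.2
        have hy0 := (hpt y).2.2
        have hx1 : (r x : ℕ) = t ∧ (r y : ℕ) + 1 = t := by split_ifs at ex ey <;> omega
        have hxy' : x < y := lt_of_le_of_ne hxy (by rintro rfl; omega)
        rcases Nat.even_or_odd (ht x) with hevx | hodx
        · exact (hpt x).2.1 hevx hx1.1
        · have hlt := hsoc.2 x y hxy' hodx
          rw [Fin.lt_def] at hlt
          split_ifs at ex ey <;> omega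
      have hstrict : ∀ x y : α, x < y → Odd (ht x) → r x < r y := by
        intro x y hxy hodx
        have hs := hsoc.2 x y hxy hodx
        rw [Fin.lt_def] at hs ⊢
        have ex := hscl x; have ey := hscl y
        split_ifs at ex ey <;> omega
      have hbd : ∀ v, Odd (ht v) → (r v : ℕ) < m + 1 := by
        intro v hv
        have h := hsbd v hv
        have e := hscl v
        have h0 := (hpt v).2.2
        have := (r v).isLt
        split_ifs at e <;> omega
      exact ⟨⟨⟨⟨hweak, hstrict⟩, hbd⟩, fun v hv => (hpt v).2.1 hv⟩,
        funext fun v => Fin.ext (hscl v)⟩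
    · rintro ⟨⟨⟨hroc, hrbd⟩, heven⟩, rfl⟩
      refine ⟨⟨⟨fun x y hxy => ?_, fun x y hxy hodx => ?_⟩, fun v hv => ?_⟩, fun v => ?_⟩
      · have h := hroc.1 x y hxy
        rw [Fin.le_def] at h ⊢
        try dsimp only
        split_ifs <;> omega
      · have h := hroc.2 x y hxy hodx
        have hz : t = 0 → (r x : ℕ) ≠ 0 := fun ht0 =>
          odd_label_pos hrk hroc (fun u hu => ht0 ▸ heven u hu) hodx
        rw [Fin.lt_def] at h ⊢
        try dsimp only
        by_cases hbad : (r x : ℕ) + 1 = t ∧ (r y : ℕ) = t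
        · exfalso
          obtain ⟨z, hcov, hzy⟩ := exists_covBy_le_of_lt hxy
          have hhz : ht z = ht x + 1 := hrk.2 x z hcov
          have hevz : Even (ht z) := by rw [hhz]; exact Odd.add_one hodx
          have l1 := hroc.2 x z hcov.lt hodx
          have l2 := hroc.1 z y hzy
          have l3 := heven z hevz
          rw [Fin.lt_def] at l1
          rw [Fin.le_def] at l2
          omega
        · split_ifs <;> omega
      · have h := hrbd v hv
        have hz : t = 0 → (r v : ℕ) ≠ 0 := fun ht0 =>
          odd_label_pos hrk hroc (fun u hu => ht0 ▸ heven u hu) hv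
        try dsimp only
        split_ifs <;> omega
      · have hb := (r v).isLt
        by_cases hev : Even (ht v)
        · have hne := heven v hev
          simp only [hev, not_true_eq_false, false_and, if_false]
          try dsimp only
          split_ifs <;>
            simp only [Finset.mem_singleton, Fin.ext_iff, Fin.coe_castSucc, Fin.val_succ,
              eq_self_iff_true, true_or, or_true] <;> omega
        · have hz : t = 0 → (r v : ℕ) ≠ 0 := fun ht0 =>
            odd_label_pos hrk hroc (fun u hu => ht0 ▸ heven u hu) (odd_of_not_even hev)
          simp only [hev, not_false_eq_true, true_and]
          try dsimp only
          split_ifs <;>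
            simp only [Finset.mem_insert, Finset.mem_singleton, Fin.ext_iff, Fin.coe_castSucc,
              Fin.val_succ, eq_self_iff_true, true_or, or_true] <;> omega
  · intro r hcnd hng
    have hex : ∃ v, Even (ht v) ∧ (r v : ℕ) = t := by
      by_contra hno
      push_neg at hno
      exact hng ⟨hcnd, fun v hv => hno v hv⟩
    obtain ⟨v, hv, hvt⟩ := hex
    refine Finset.prod_eq_zero (Finset.mem_univ v) ?_
    try dsimp only
    rw [if_pos hv, hvt, hp]
  · exact fun r hg => And.left hg

end Stmt5Aux


/-- For a finite ranked poset `P`, the family obtained from the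
`N_P^(m)` by the substitution (⋆) is a stable x-family satisfying equation (E_x). -/
theorem stmt5 (α : Type) [Fintype α] [PartialOrder α] (ht : α → ℕ) (hrk : IsRanked ht) :
    IsStableX (fun m => aeval (pqToX m) (NP α ht m)) ∧
      SatisfiesEx (fun m => aeval (pqToX m) (NP α ht m)) := by
  constructor
  · constructor
    · -- vars
      intro m
      dsimp only
      rw [aeval_NP]
      have hsupp : Tsum ht m (fun j => pqToX m (Sum.inl j)) (fun j => pqToX m (Sum.inr j)) ∈
          supported ℚ (↑(Finset.range (2 * m + 1)) : Set ℕ) := by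
        unfold Tsum
        apply Subalgebra.sum_mem
        intro r _
        by_cases hc : OrderCond ht r ∧ ∀ v, Odd (ht v) → (r v : ℕ) < m
        · rw [if_pos hc]
          apply Subalgebra.prod_mem
          intro v _
          have hb : (r v : ℕ) ≤ m := Nat.lt_succ_iff.mp (r v).isLt
          by_cases hev : Even (ht v)
          · rw [if_pos hev]
            simp only [pqToX, Sum.elim_inl]
            by_cases hm : (r v : ℕ) = m
            · rw [if_pos hm]
              exact (X_mem_supported).2 (by
                simp only [Finset.coe_range, Set.mem_Iio]; omega)
            · rw [if_neg hm]
              refine sub_mem ((X_mem_supported).2 ?_) ((X_mem_supported).2 ?_) <;>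
                simp only [Finset.coe_range, Set.mem_Iio] <;> omega
          · rw [if_neg hev]
            simp only [pqToX, Sum.elim_inr]
            have h1 := hc.2 v (odd_of_not_even hev)
            refine sub_mem ((X_mem_supported).2 ?_) ((X_mem_supported).2 ?_) <;>
              simp only [Finset.coe_range, Set.mem_Iio] <;> omega
        · rw [if_neg hc]; exact zero_mem _
      exact Finset.coe_subset.mp (MvPolynomial.mem_supported.mp hsupp)
    · -- stability
      intro m
      dsimp only
      rw [aeval_NP ht (m + 1) (pqToX (m + 1)), aeval_NP ht m (pqToX m), map_Tsum]
      refine (Tsum_A ht m _ _ ?_ ?_).trans (Tsum_congr ht m _ _ _ _ ?_ ?_)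
      · show (aeval fun k => if k < 2 * m + 1 then (X k : MvPolynomial ℕ ℚ) else 0)
          (pqToX (m + 1) (Sum.inl (m + 1))) = 0
        simp only [pqToX, Sum.elim_inl]
        (try split_ifs) <;> simp only [map_sub, aeval_X] <;> (try split_ifs) <;>
          first | (exfalso; omega) | ring1 | rfl | simp_all
      · show (aeval fun k => if k < 2 * m + 1 then (X k : MvPolynomial ℕ ℚ) else 0)
          (pqToX (m + 1) (Sum.inr m)) = 0
        simp only [pqToX, Sum.elim_inr]
        (try split_ifs) <;> simp only [map_sub, aeval_X] <;> (try split_ifs) <;>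
          first | (exfalso; omega) | ring1 | rfl | simp_all
      · intro j hj
        show (aeval fun k => if k < 2 * m + 1 then (X k : MvPolynomial ℕ ℚ) else 0)
          (pqToX (m + 1) (Sum.inl j)) = pqToX m (Sum.inl j)
        simp only [pqToX, Sum.elim_inl]
        (try split_ifs) <;> simp only [map_sub, aeval_X] <;> (try split_ifs) <;>
          first | (exfalso; omega) | ring1 | rfl | simp_all
      · intro j hj
        show (aeval fun k => if k < 2 * m + 1 then (X k : MvPolynomial ℕ ℚ) else 0)
          (pqToX (m + 1) (Sum.inr j)) = pqToX m (Sum.inr j)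
        simp only [pqToX, Sum.elim_inr]
        (try split_ifs) <;> simp only [map_sub, aeval_X] <;> (try split_ifs) <;>
          first | (exfalso; omega) | ring1 | rfl | simp_all
  · -- E_x
    intro m i hi
    dsimp only
    rw [aeval_NP ht (m + 1) (pqToX (m + 1)), aeval_NP ht m (pqToX m), map_Tsum, map_Tsum]
    rcases Nat.even_or_odd i with he | ho
    · -- i = 2t : apply Tsum_Bp
      obtain ⟨t, rfl⟩ : ∃ t, i = 2 * t := ⟨i / 2, by have := Nat.even_iff.mp he; omega⟩
      have htm : t ≤ m := by omega
      have hp1 : ∀ k, k ≤ m → k ≠ t →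
          (aeval fun k => if k = 2 * t + 1 then (X (2 * t) : MvPolynomial ℕ ℚ) else X k)
            (pqToX (m + 1) (Sum.inl k)) = X (2 * k) - X (2 * k + 1) := by
        intro k h1 h2
        simp only [pqToX, Sum.elim_inl]
        (try split_ifs) <;> simp only [map_sub, aeval_X] <;> (try split_ifs) <;>
          first | (exfalso; omega) | ring1 | rfl | simp_all
      have hp2 : (aeval fun k => if k = 2 * t + 1 then (X (2 * t) : MvPolynomial ℕ ℚ) else X k)
          (pqToX (m + 1) (Sum.inl (m + 1))) = X (2 * m + 2) := by
        simp only [pqToX, Sum.elim_inl]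
        (try split_ifs) <;> simp only [map_sub, aeval_X] <;> (try split_ifs) <;>
          first | (exfalso; omega) | ring1 | rfl | simp_all
      have hpt : (aeval fun k => if k = 2 * t + 1 then (X (2 * t) : MvPolynomial ℕ ℚ) else X k)
          (pqToX (m + 1) (Sum.inl t)) = 0 := by
        simp only [pqToX, Sum.elim_inl]
        (try split_ifs) <;> simp only [map_sub, aeval_X] <;> (try split_ifs) <;>
          first | (exfalso; omega) | ring1 | rfl | simp_all
      have hq1 : ∀ k, k ≠ t →
          (aeval fun k => if k = 2 * t + 1 then (X (2 * t) : MvPolynomial ℕ ℚ) else X k)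
            (pqToX (m + 1) (Sum.inr k)) = X (2 * k + 1) - X (2 * k + 2) := by
        intro k h2
        simp only [pqToX, Sum.elim_inr]
        (try split_ifs) <;> simp only [map_sub, aeval_X] <;> (try split_ifs) <;>
          first | (exfalso; omega) | ring1 | rfl | simp_all
      have hq2 : (aeval fun k => if k = 2 * t + 1 then (X (2 * t) : MvPolynomial ℕ ℚ) else X k)
          (pqToX (m + 1) (Sum.inr t)) = X (2 * t) - X (2 * t + 2) := by
        simp only [pqToX, Sum.elim_inr]
        (try split_ifs) <;> simp only [map_sub, aeval_X] <;> (try split_ifs) <;>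
          first | (exfalso; omega) | ring1 | rfl | simp_all
      have rp1 : ∀ k, k < t →
          (aeval fun k => if k < 2 * t then (X k : MvPolynomial ℕ ℚ) else X (k + 2))
            (pqToX m (Sum.inl k)) = X (2 * k) - X (2 * k + 1) := by
        intro k h1
        simp only [pqToX, Sum.elim_inl]
        (try split_ifs) <;> simp only [map_sub, aeval_X] <;> (try split_ifs) <;>
          first | (exfalso; omega) | ring1 | rfl | simp_all
      have rp2 : ∀ k, t ≤ k → k < m →
          (aeval fun k => if k < 2 * t then (X k : MvPolynomial ℕ ℚ) else X (k + 2))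
            (pqToX m (Sum.inl k)) = X (2 * k + 2) - X (2 * k + 3) := by
        intro k h1 h2
        simp only [pqToX, Sum.elim_inl]
        (try split_ifs) <;> simp only [map_sub, aeval_X] <;> (try split_ifs) <;>
          first | (exfalso; omega) | ring1 | rfl | simp_all
      have rp3 : (aeval fun k => if k < 2 * t then (X k : MvPolynomial ℕ ℚ) else X (k + 2))
          (pqToX m (Sum.inl m)) = X (2 * m + 2) := by
        simp only [pqToX, Sum.elim_inl]
        (try split_ifs) <;> simp only [map_sub, aeval_X] <;> (try split_ifs) <;>
          first | (exfalso; omega) | ring1 | rfl | simp_all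
      have rq1 : ∀ k, k + 1 < t →
          (aeval fun k => if k < 2 * t then (X k : MvPolynomial ℕ ℚ) else X (k + 2))
            (pqToX m (Sum.inr k)) = X (2 * k + 1) - X (2 * k + 2) := by
        intro k h1
        simp only [pqToX, Sum.elim_inr]
        (try split_ifs) <;> simp only [map_sub, aeval_X] <;> (try split_ifs) <;>
          first | (exfalso; omega) | ring1 | rfl | simp_all
      have rq2 : ∀ k, k + 1 = t →
          (aeval fun k => if k < 2 * t then (X k : MvPolynomial ℕ ℚ) else X (k + 2))
            (pqToX m (Sum.inr k)) = X (2 * k + 1) - X (2 * k + 4) := by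
        intro k h1
        simp only [pqToX, Sum.elim_inr]
        (try split_ifs) <;> simp only [map_sub, aeval_X] <;> (try split_ifs) <;>
          first | (exfalso; omega) | ring1 | rfl | simp_all
      have rq3 : ∀ k, t ≤ k →
          (aeval fun k => if k < 2 * t then (X k : MvPolynomial ℕ ℚ) else X (k + 2))
            (pqToX m (Sum.inr k)) = X (2 * k + 3) - X (2 * k + 4) := by
        intro k h1
        simp only [pqToX, Sum.elim_inr]
        (try split_ifs) <;> simp only [map_sub, aeval_X] <;> (try split_ifs) <;>
          first | (exfalso; omega) | ring1 | rfl | simp_all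
      refine (Tsum_Bp ht hrk m t htm _ _ hpt).trans (Tsum_congr ht m _ _ _ _ ?_ ?_)
      · intro j hj
        by_cases h1 : j < t
        · rw [if_pos h1, hp1 j hj (by omega), rp1 j h1]
        · rw [if_neg h1]
          by_cases h2 : j = m
          · subst h2
            rw [hp2, rp3]
          · rw [hp1 (j + 1) (by omega) (by omega), rp2 j (by omega) (by omega)]
            all_goals exact Xsub (by ring) (by ring)
      · intro j hj
        by_cases h1 : j + 1 < t
        · rw [if_pos h1, hq1 j (by omega), rq1 j h1]
        · rw [if_neg h1]
          by_cases h2 : j + 1 = t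
          · rw [if_pos h2, hq1 j (by omega), h2, hq2, rq2 j h2]
            rw [Xeq (show 2 * t = 2 * j + 2 by omega), Xeq (show 2 * t + 2 = 2 * j + 4 by omega)]
            ring
          · rw [if_neg h2, hq1 (j + 1) (by omega), rq3 j (by omega)]
            all_goals exact Xsub (by ring) (by ring)
    · -- i = 2t+1 : apply Tsum_Bq
      obtain ⟨t, rfl⟩ : ∃ t, i = 2 * t + 1 := ⟨i / 2, by have := Nat.odd_iff.mp ho; omega⟩
      have htm : t ≤ m := by omega
      have hq1 : ∀ k, k ≠ t →
          (aeval fun k => if k = 2 * t + 1 + 1 then (X (2 * t + 1) : MvPolynomial ℕ ℚ) else X k)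
            (pqToX (m + 1) (Sum.inr k)) = X (2 * k + 1) - X (2 * k + 2) := by
        intro k h2
        simp only [pqToX, Sum.elim_inr]
        (try split_ifs) <;> simp only [map_sub, aeval_X] <;> (try split_ifs) <;>
          first | (exfalso; omega) | ring1 | rfl | simp_all
      have hqt : (aeval fun k => if k = 2 * t + 1 + 1 then (X (2 * t + 1) : MvPolynomial ℕ ℚ) else X k)
          (pqToX (m + 1) (Sum.inr t)) = 0 := by
        simp only [pqToX, Sum.elim_inr]
        (try split_ifs) <;> simp only [map_sub, aeval_X] <;> (try split_ifs) <;>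
          first | (exfalso; omega) | ring1 | rfl | simp_all
      have hp1 : ∀ k, k ≤ m → k ≠ t + 1 →
          (aeval fun k => if k = 2 * t + 1 + 1 then (X (2 * t + 1) : MvPolynomial ℕ ℚ) else X k)
            (pqToX (m + 1) (Sum.inl k)) = X (2 * k) - X (2 * k + 1) := by
        intro k h1 h2
        simp only [pqToX, Sum.elim_inl]
        (try split_ifs) <;> simp only [map_sub, aeval_X] <;> (try split_ifs) <;>
          first | (exfalso; omega) | ring1 | rfl | simp_all
      have hp2 : t + 1 ≤ m →
          (aeval fun k => if k = 2 * t + 1 + 1 then (X (2 * t + 1) : MvPolynomial ℕ ℚ) else X k)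
            (pqToX (m + 1) (Sum.inl (t + 1))) = X (2 * t + 1) - X (2 * t + 3) := by
        intro h1
        simp only [pqToX, Sum.elim_inl]
        (try split_ifs) <;> simp only [map_sub, aeval_X] <;> (try split_ifs) <;>
          first | (exfalso; omega) | ring1 | rfl | simp_all
      have hp3 : t = m →
          (aeval fun k => if k = 2 * t + 1 + 1 then (X (2 * t + 1) : MvPolynomial ℕ ℚ) else X k)
            (pqToX (m + 1) (Sum.inl (t + 1))) = X (2 * t + 1) := by
        intro h1
        simp only [pqToX, Sum.elim_inl]
        (try split_ifs) <;> simp only [map_sub, aeval_X] <;> (try split_ifs) <;>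
          first | (exfalso; omega) | ring1 | rfl | simp_all
      have hp4 : t ≠ m →
          (aeval fun k => if k = 2 * t + 1 + 1 then (X (2 * t + 1) : MvPolynomial ℕ ℚ) else X k)
            (pqToX (m + 1) (Sum.inl (m + 1))) = X (2 * m + 2) := by
        intro h1
        simp only [pqToX, Sum.elim_inl]
        (try split_ifs) <;> simp only [map_sub, aeval_X] <;> (try split_ifs) <;>
          first | (exfalso; omega) | ring1 | rfl | simp_all
      have rp1 : ∀ k, k < t →
          (aeval fun k => if k < 2 * t + 1 then (X k : MvPolynomial ℕ ℚ) else X (k + 2))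
            (pqToX m (Sum.inl k)) = X (2 * k) - X (2 * k + 1) := by
        intro k h1
        simp only [pqToX, Sum.elim_inl]
        (try split_ifs) <;> simp only [map_sub, aeval_X] <;> (try split_ifs) <;>
          first | (exfalso; omega) | ring1 | rfl | simp_all
      have rp2 : t < m →
          (aeval fun k => if k < 2 * t + 1 then (X k : MvPolynomial ℕ ℚ) else X (k + 2))
            (pqToX m (Sum.inl t)) = X (2 * t) - X (2 * t + 3) := by
        intro h1
        simp only [pqToX, Sum.elim_inl]
        (try split_ifs) <;> simp only [map_sub, aeval_X] <;> (try split_ifs) <;>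
          first | (exfalso; omega) | ring1 | rfl | simp_all
      have rp3 : t = m →
          (aeval fun k => if k < 2 * t + 1 then (X k : MvPolynomial ℕ ℚ) else X (k + 2))
            (pqToX m (Sum.inl t)) = X (2 * t) := by
        intro h1
        simp only [pqToX, Sum.elim_inl]
        (try split_ifs) <;> simp only [map_sub, aeval_X] <;> (try split_ifs) <;>
          first | (exfalso; omega) | ring1 | rfl | simp_all
      have rp4 : ∀ k, t < k → k < m →
          (aeval fun k => if k < 2 * t + 1 then (X k : MvPolynomial ℕ ℚ) else X (k + 2))
            (pqToX m (Sum.inl k)) = X (2 * k + 2) - X (2 * k + 3) := by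
        intro k h1 h2
        simp only [pqToX, Sum.elim_inl]
        (try split_ifs) <;> simp only [map_sub, aeval_X] <;> (try split_ifs) <;>
          first | (exfalso; omega) | ring1 | rfl | simp_all
      have rp5 : t < m →
          (aeval fun k => if k < 2 * t + 1 then (X k : MvPolynomial ℕ ℚ) else X (k + 2))
            (pqToX m (Sum.inl m)) = X (2 * m + 2) := by
        intro h1
        simp only [pqToX, Sum.elim_inl]
        (try split_ifs) <;> simp only [map_sub, aeval_X] <;> (try split_ifs) <;>
          first | (exfalso; omega) | ring1 | rfl | simp_all
      have rq1 : ∀ k, k < t →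
          (aeval fun k => if k < 2 * t + 1 then (X k : MvPolynomial ℕ ℚ) else X (k + 2))
            (pqToX m (Sum.inr k)) = X (2 * k + 1) - X (2 * k + 2) := by
        intro k h1
        simp only [pqToX, Sum.elim_inr]
        (try split_ifs) <;> simp only [map_sub, aeval_X] <;> (try split_ifs) <;>
          first | (exfalso; omega) | ring1 | rfl | simp_all
      have rq2 : ∀ k, t ≤ k →
          (aeval fun k => if k < 2 * t + 1 then (X k : MvPolynomial ℕ ℚ) else X (k + 2))
            (pqToX m (Sum.inr k)) = X (2 * k + 3) - X (2 * k + 4) := by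
        intro k h1
        simp only [pqToX, Sum.elim_inr]
        (try split_ifs) <;> simp only [map_sub, aeval_X] <;> (try split_ifs) <;>
          first | (exfalso; omega) | ring1 | rfl | simp_all
      refine (Tsum_Bq ht hrk m t htm _ _ hqt).trans (Tsum_congr ht m _ _ _ _ ?_ ?_)
      · intro j hj
        by_cases h1 : j < t
        · rw [if_pos h1, hp1 j hj (by omega), rp1 j h1]
        · rw [if_neg h1]
          by_cases h2 : j = t
          · rw [if_pos h2, h2]
            by_cases h3 : t = m
            · rw [hp1 t htm (by omega), hp3 h3, rp3 h3]
              ring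
            · rw [hp1 t htm (by omega), hp2 (by omega), rp2 (by omega)]
              ring
          · rw [if_neg h2]
            by_cases h3 : j = m
            · subst h3
              rw [hp4 (by omega), rp5 (by omega)]
            · rw [hp1 (j + 1) (by omega) (by omega), rp4 j (by omega) (by omega)]
              all_goals exact Xsub (by ring) (by ring)
      · intro j hj
        by_cases h1 : j < t
        · rw [if_pos h1, hq1 j (by omega), rq1 j h1]
        · rw [if_neg h1, hq1 (j + 1) (by omega), rq2 j (by omega)]
          all_goals exact Xsub (by ring) (by ring)
end
end

section
/- Let P be a finite ranked poset and m ≥ 0. Substituting p_i := −y_i (1 ≤ i ≤ m), p_{m+1} := 0 and q_i := y_i (1 ≤ i ≤ m) in N_P^(m) yields (−1)^{|V₀|} · F_P^(m)(y₁,…,y_m), where |V₀| is the number of elements of P of even rank. -/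
open MvPolynomial
open scoped Classical

noncomputable section

/-- For a finite ranked poset `P` and `m ≥ 0`, substituting
`p_i := -y_i` (`1 ≤ i ≤ m`), `p_{m+1} := 0` and `q_i := y_i` (`1 ≤ i ≤ m`) in `N_P^(m)`
yields `(-1)^{|V₀|} · F_P^(m)(y₁,…,y_m)`. -/
theorem stmt6 (α : Type) [Fintype α] [PartialOrder α] (ht : α → ℕ) (hrk : IsRanked ht)
    (m : ℕ) :
    aeval (Sum.elim (fun j => if j = m then 0 else -(X j : MvPolynomial ℕ ℚ))
        (fun j => X j))
      (NP α ht m) =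
    ((-1 : ℚ) ^ (Finset.univ.filter (fun v : α => Even (ht v))).card) • FP α ht m := by
  classical
  set c := (Finset.univ.filter (fun v : α => Even (ht v))).card with hcdef
  set σ : ℕ ⊕ ℕ → MvPolynomial ℕ ℚ :=
    Sum.elim (fun j => if j = m then 0 else -(X j : MvPolynomial ℕ ℚ)) (fun j => X j) with hσ
  set G : (α → Fin (m + 1)) → MvPolynomial ℕ ℚ := fun r' =>
    if OrderCond ht r' ∧ ∀ v, (r' v : ℕ) < m then
      ((-1 : ℚ) ^ c) • ∏ v : α, X ((r' v : ℕ)) else 0 with hG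
  have key : ∀ r' : α → Fin (m + 1),
      aeval (R := ℚ) σ (if OrderCond ht r' ∧ ∀ v, Odd (ht v) → (r' v : ℕ) < m then
          ∏ v : α, if Even (ht v) then X (Sum.inl (r' v : ℕ)) else X (Sum.inr (r' v : ℕ))
        else 0) = G r' := by
    intro r'
    by_cases h : OrderCond ht r' ∧ ∀ v, Odd (ht v) → (r' v : ℕ) < m
    · rw [if_pos h, map_prod]
      by_cases hall : ∀ v, (r' v : ℕ) < m
      · rw [hG]
        simp only [if_pos (And.intro h.1 hall)]
        have hfac : ∀ v : α,
            aeval (R := ℚ) σ (if Even (ht v) then (X (Sum.inl (r' v : ℕ)) : MvPolynomial (ℕ ⊕ ℕ) ℚ)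
              else X (Sum.inr (r' v : ℕ)))
            = (if Even (ht v) then (-1 : MvPolynomial ℕ ℚ) else 1) * X ((r' v : ℕ)) := by
          intro v
          by_cases hv : Even (ht v)
          · simp [hv, hσ, Nat.ne_of_lt (hall v)]
          · simp [hv, hσ]
        rw [Finset.prod_congr rfl fun v _ => hfac v, Finset.prod_mul_distrib,
          Finset.prod_ite, Finset.prod_const, Finset.prod_const, one_pow, mul_one]
        rw [MvPolynomial.smul_eq_C_mul]
        congr 1
        rw [map_pow, map_neg, map_one]
      · push_neg at hall
        obtain ⟨v, hv⟩ := hall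
        have hvm : (r' v : ℕ) = m := le_antisymm (Nat.lt_succ_iff.mp (r' v).isLt) hv
        have hve : Even (ht v) := by
          rcases Nat.even_or_odd (ht v) with he | ho
          · exact he
          · exact absurd (h.2 v ho) (by omega)
        have hzero : aeval (R := ℚ) σ (if Even (ht v) then (X (Sum.inl (r' v : ℕ)) :
            MvPolynomial (ℕ ⊕ ℕ) ℚ) else X (Sum.inr (r' v : ℕ))) = 0 := by
          simp [hve, hσ, hvm]
        rw [Finset.prod_eq_zero (Finset.mem_univ v) hzero]
        have hnot : ¬(OrderCond ht r' ∧ ∀ v, (r' v : ℕ) < m) := by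
          rintro ⟨-, hall'⟩
          exact absurd (hall' v) (not_lt.mpr hv)
        simp [hG, hnot]
    · rw [if_neg h, map_zero]
      have hnot : ¬(OrderCond ht r' ∧ ∀ v, (r' v : ℕ) < m) :=
        fun hh => h ⟨hh.1, fun v _ => hh.2 v⟩
      simp [hG, hnot]
  unfold NP FP
  rw [map_sum, Finset.sum_congr rfl fun r' _ => key r', Finset.smul_sum]
  have hinj : ∀ r ∈ (Finset.univ : Finset (α → Fin m)), ∀ s ∈ (Finset.univ : Finset (α → Fin m)),
      (fun v => Fin.castSucc (r v)) = (fun v => Fin.castSucc (s v)) → r = s := by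
    intro r _ s _ hrs
    funext v
    exact Fin.castSucc_injective _ (congrFun hrs v)
  have himg : ∑ r' : α → Fin (m + 1), G r'
      = ∑ r : α → Fin m, G (fun v => Fin.castSucc (r v)) := by
    rw [← Finset.sum_image hinj]
    apply (Finset.sum_subset (Finset.subset_univ _) ?_).symm
    intro r' _ hr'
    have hnot : ¬(OrderCond ht r' ∧ ∀ v, (r' v : ℕ) < m) := by
      rintro ⟨-, hall⟩
      apply hr'
      refine Finset.mem_image.mpr ⟨fun v => ⟨(r' v : ℕ), hall v⟩, Finset.mem_univ _, ?_⟩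
      funext v
      exact Fin.ext rfl
    simp [hG, hnot]
  rw [himg]
  refine Finset.sum_congr rfl fun r _ => ?_
  have hOC : OrderCond ht (fun v => Fin.castSucc (r v)) ↔ OrderCond ht r := by
    unfold OrderCond
    simp [Fin.castSucc_le_castSucc_iff, Fin.castSucc_lt_castSucc_iff]
  simp only [hG]
  by_cases hoc : OrderCond ht r
  · rw [if_pos ⟨hOC.mpr hoc, fun v => by simp [(r v).isLt]⟩, if_pos hoc]
    simp
  · rw [if_neg (fun hh => hoc (hOC.mp hh.1)), if_neg hoc, smul_zero]
end
end

section
/- Let n ≥ 1 and let f = (f_{2m+1})_{m≥0} be a stable x-family satisfying equation (E_x) such that every f_{2m+1} is homogeneous of degree n. Suppose that for every composition (c₁,…,c_r) of n and every m with 2m+1 ≥ r, the coefficient of the packed monomial x₁^{c₁}x₂^{c₂}⋯x_r^{c_r} in f_{2m+1} is zero. Then f_{2m+1} = 0 for all m ≥ 0. -/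
/-!
Every exponent `d` of `f_{2m+1}` is reduced to packed ones by induction on
`2m+1 - z`, where `z` is the first index with `d_z = 0`.  Write (E_x) at `i = z` as
`rename (merge z+1 into z) f_{2m+1} = rename (skip z, z+1) f_{2m-1}`.  If `d_{z+1} = 0`, the
exponent `d` is the only one merging to itself, so its coefficient is a coefficient of
`f_{2m-1}` at the exponent with the two zeros deleted.  If `d_{z+1} ≠ 0`, the merged exponent
has a nonzero entry at `z`, so its coefficient on the right vanishes, while on the left it is
the sum of the coefficients of `d` and of exponents whose first zero lies beyond `z`.
-/

open MvPolynomial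
open scoped Classical

noncomputable section

namespace Finsupp

lemma exists_apply_eq_zero {α M : Type*} [Infinite α] [Zero M] (d : α →₀ M) :
    ∃ a, d a = 0 :=
  (Infinite.exists_notMem_finset d.support).imp fun _ => notMem_support_iff.mp

def firstZero (d : ℕ →₀ ℕ) : ℕ := Nat.find d.exists_apply_eq_zero

lemma apply_firstZero (d : ℕ →₀ ℕ) : d d.firstZero = 0 :=
  Nat.find_spec d.exists_apply_eq_zero

lemma le_firstZero_iff {d : ℕ →₀ ℕ} {g : ℕ} : g ≤ d.firstZero ↔ ∀ j < g, d j ≠ 0 :=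
  Nat.le_find_iff _ _

lemma apply_ne_zero_of_lt_firstZero {d : ℕ →₀ ℕ} {j : ℕ} (hj : j < d.firstZero) : d j ≠ 0 :=
  Nat.find_min d.exists_apply_eq_zero hj

end Finsupp

lemma MvPolynomial.coeff_eq_zero_of_mem_support_of_notMem {σ R : Type*} [CommSemiring R]
    {p : MvPolynomial σ R} {s : Finset σ} (hp : p.vars ⊆ s) {d : σ →₀ ℕ} {k : σ}
    (hk : k ∈ d.support) (hks : k ∉ s) : coeff d p = 0 := by
  by_contra hd
  exact hks (hp ((mem_vars_iff_mem_support k).2 ⟨d, mem_support_iff.2 hd, hk⟩))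

lemma MvPolynomial.coeff_rename_mapDomain_of_fiber {σ τ R : Type*} [CommSemiring R]
    (f : σ → τ) (p : MvPolynomial σ R) (d : σ →₀ ℕ)
    (h : ∀ u : σ →₀ ℕ, u.mapDomain f = d.mapDomain f → u ≠ d → coeff u p = 0) :
    coeff (d.mapDomain f) (rename f p) = coeff d p := by
  conv_lhs => rw [p.as_sum]
  rw [map_sum, coeff_sum]
  simp only [rename_monomial, coeff_monomial]
  rw [Finset.sum_eq_single d]
  · exact if_pos rfl
  · intro u _ hud
    split_ifs with hu
    exacts [h u hu hud, rfl]
  · intro hd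
    simp [notMem_support_iff.mp hd]

lemma MvPolynomial.coeff_eq_zero_of_support_subset_range_firstZero {R : Type*} [CommSemiring R]
    {p : MvPolynomial ℕ R} {n r : ℕ} (hp : p.IsHomogeneous n)
    (hpacked : ∀ c : List ℕ, (∀ a ∈ c, 0 < a) → c.sum = n → c.length ≤ r →
      coeff (∑ k ∈ Finset.range c.length, Finsupp.single k (c.getD k 0)) p = 0)
    {d : ℕ →₀ ℕ} (hd : d.support ⊆ Finset.range d.firstZero) (hr : d.firstZero ≤ r) :
    coeff d p = 0 := by
  by_contra hne
  set c : List ℕ := List.ofFn fun j : Fin d.firstZero => d j with hc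
  have hlen : c.length = d.firstZero := List.length_ofFn
  have hmono : ∑ k ∈ Finset.range c.length, Finsupp.single k (c.getD k 0) = d := by
    conv_rhs => rw [← Finsupp.sum_single d, Finsupp.sum_of_support_subset d hd _ (by simp)]
    rw [hlen]
    refine Finset.sum_congr rfl fun k hk => ?_
    rw [hc, List.getD_eq_getElem _ _ (by simpa using hk), List.getElem_ofFn]
  refine hne (hmono ▸ hpacked c ?_ ?_ (hlen ▸ hr))
  · simpa [hc, List.mem_ofFn, Nat.pos_iff_ne_zero] using
      fun j : Fin d.firstZero => Finsupp.apply_ne_zero_of_lt_firstZero j.isLt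
  · by_contra hsum
    refine hne (hp.coeff_eq_zero ?_)
    rwa [Finsupp.degree_apply,
      Finset.sum_subset hd fun k _ hk => Finsupp.notMem_support_iff.mp hk, Finset.sum_range,
      ← List.sum_ofFn]

def mergeSucc (i : ℕ) : ℕ → ℕ := fun k => if k = i + 1 then i else k

def skipTwo (i : ℕ) : ℕ → ℕ := fun k => if k < i then k else k + 2

lemma skipTwo_injective (i : ℕ) : Function.Injective (skipTwo i) := by
  intro a b h
  simp only [skipTwo] at h
  split_ifs at h <;> omega

lemma mem_range_skipTwo {i k : ℕ} : k ∈ Set.range (skipTwo i) ↔ k ≠ i ∧ k ≠ i + 1 := by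
  constructor
  · rintro ⟨j, rfl⟩
    simp only [skipTwo]
    split_ifs <;> omega
  · intro hk
    by_cases hki : k < i
    · exact ⟨k, if_pos hki⟩
    · refine ⟨k - 2, ?_⟩
      simp only [skipTwo]
      rw [if_neg (by omega)]
      omega

lemma mapDomain_mergeSucc_apply (i : ℕ) (u : ℕ →₀ ℕ) (k : ℕ) :
    u.mapDomain (mergeSucc i) k =
      if k = i + 1 then 0 else if k = i then u i + u (i + 1) else u k := by
  have hmerge : u.mapDomain (mergeSucc i) = u.erase (i + 1) + Finsupp.single i (u (i + 1)) := by
    conv_lhs => rw [← Finsupp.erase_add_single (i + 1) u]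
    rw [Finsupp.mapDomain_add, Finsupp.mapDomain_single, Finsupp.mapDomain_congr (g := id),
      Finsupp.mapDomain_id]
    · simp [mergeSucc]
    · intro x hx
      rw [Finsupp.support_erase, Finset.mem_erase] at hx
      simp [mergeSucc, hx.1]
  rw [hmerge]
  split_ifs with h1 h2 <;> subst_vars <;> simp [add_comm, *]

lemma eq_of_mapDomain_mergeSucc_eq {i : ℕ} {u d : ℕ →₀ ℕ}
    (h : u.mapDomain (mergeSucc i) = d.mapDomain (mergeSucc i)) (hi : u i = d i) : u = d := by
  have hi1 := DFunLike.congr_fun h i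
  simp only [mapDomain_mergeSucc_apply, if_neg (Nat.succ_ne_self i).symm, if_true] at hi1
  ext k
  rcases eq_or_ne k (i + 1) with rfl | hk1
  · omega
  rcases eq_or_ne k i with rfl | hki
  · exact hi
  simpa only [mapDomain_mergeSucc_apply, if_neg hk1, if_neg hki] using DFunLike.congr_fun h k

lemma Finsupp.firstZero_lt_of_mapDomain_mergeSucc_eq {u d : ℕ →₀ ℕ}
    (h : u.mapDomain (mergeSucc d.firstZero) = d.mapDomain (mergeSucc d.firstZero))
    (hud : u ≠ d) : d.firstZero < u.firstZero := by
  refine Nat.lt_iff_add_one_le.2 (le_firstZero_iff.2 fun j hj => ?_)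
  rcases (Nat.lt_succ_iff.1 hj).lt_or_eq with hj | rfl
  · have huj := DFunLike.congr_fun h j
    simp only [mapDomain_mergeSucc_apply, if_neg (by omega : j ≠ d.firstZero + 1),
      if_neg hj.ne] at huj
    exact huj ▸ apply_ne_zero_of_lt_firstZero hj
  · exact fun hu => hud (eq_of_mapDomain_mergeSucc_eq h (hu.trans d.apply_firstZero.symm))

lemma SatisfiesEx.rename_mergeSucc_eq {f : ℕ → MvPolynomial ℕ ℚ} (hex : SatisfiesEx f)
    {m i : ℕ} (hi : i < 2 * m + 2) :
    rename (mergeSucc i) (f (m + 1)) = rename (skipTwo i) (f m) := by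
  rw [rename_eq_aeval, rename_eq_aeval]
  convert hex m i hi using 3 <;> funext k <;> simp only [Function.comp, mergeSucc, skipTwo] <;>
    split_ifs <;> rfl

section SatisfiesEx

variable {f : ℕ → MvPolynomial ℕ ℚ} (hex : SatisfiesEx f) {m i : ℕ} (hi : i < 2 * m + 2)
include hex hi

lemma SatisfiesEx.coeff_mapDomain_skipTwo (u : ℕ →₀ ℕ) :
    coeff (u.mapDomain (skipTwo i)) (f (m + 1)) = coeff u (f m) := by
  set d := u.mapDomain (skipTwo i)
  have hdi : d i = 0 :=
    Finsupp.mapDomain_of_notMem_range u i fun h => (mem_range_skipTwo.1 h).1 rfl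
  have hdi1 : d (i + 1) = 0 :=
    Finsupp.mapDomain_of_notMem_range u (i + 1) fun h => (mem_range_skipTwo.1 h).2 rfl
  have hmerge : d.mapDomain (mergeSucc i) = d := by
    ext k
    rw [mapDomain_mergeSucc_apply]
    split_ifs <;> simp_all
  have hfiber : ∀ v : ℕ →₀ ℕ, v.mapDomain (mergeSucc i) = d.mapDomain (mergeSucc i) → v ≠ d →
      coeff v (f (m + 1)) = 0 := by
    intro v hv hvd
    refine absurd (eq_of_mapDomain_mergeSucc_eq hv ?_) hvd
    have hvi := DFunLike.congr_fun hv i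
    simp only [mapDomain_mergeSucc_apply, if_neg (Nat.succ_ne_self i).symm, if_true] at hvi
    omega
  rw [← coeff_rename_mapDomain_of_fiber _ _ _ hfiber, hmerge, hex.rename_mergeSucc_eq hi,
    coeff_rename_mapDomain _ (skipTwo_injective i)]

lemma SatisfiesEx.coeff_eq_zero_of_apply_succ_ne_zero {d : ℕ →₀ ℕ} (hdi1 : d (i + 1) ≠ 0)
    (hfiber : ∀ u : ℕ →₀ ℕ, u.mapDomain (mergeSucc i) = d.mapDomain (mergeSucc i) → u ≠ d →
      coeff u (f (m + 1)) = 0) :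
    coeff d (f (m + 1)) = 0 := by
  rw [← coeff_rename_mapDomain_of_fiber _ _ _ hfiber, hex.rename_mergeSucc_eq hi]
  refine coeff_rename_eq_zero _ _ _ fun u hu => absurd ?_ hdi1
  have hui := DFunLike.congr_fun hu i
  rw [Finsupp.mapDomain_of_notMem_range u i fun h => (mem_range_skipTwo.1 h).1 rfl,
    mapDomain_mergeSucc_apply] at hui
  simp only [if_neg (Nat.succ_ne_self i).symm, if_true] at hui
  omega

end SatisfiesEx

lemma SatisfiesEx.coeff_eq_zero {f : ℕ → MvPolynomial ℕ ℚ} (hex : SatisfiesEx f)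
    (hvars : ∀ m, (f m).vars ⊆ Finset.range (2 * m + 1))
    (hpacked : ∀ m (d : ℕ →₀ ℕ), d.support ⊆ Finset.range d.firstZero →
      d.firstZero ≤ 2 * m + 1 → coeff d (f m) = 0)
    (m : ℕ) (d : ℕ →₀ ℕ) : coeff d (f m) = 0 := by
  induction hN : 2 * m + 1 - d.firstZero using Nat.strong_induction_on generalizing m d with
  | _ N ih =>
  subst hN
  set g := d.firstZero
  by_cases hout : ∃ k ∈ d.support, 2 * m + 1 ≤ k
  · obtain ⟨k, hk, hkm⟩ := hout
    exact coeff_eq_zero_of_mem_support_of_notMem (hvars m) hk (by simpa using hkm)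
  push Not at hout
  by_cases hpack : d.support ⊆ Finset.range g
  · refine hpacked m d hpack (le_of_not_gt fun hgm => ?_)
    have := hout _ (Finsupp.mem_support_iff.2 (Finsupp.apply_ne_zero_of_lt_firstZero hgm))
    omega
  obtain ⟨k, hk, hkg⟩ := Finset.not_subset.1 hpack
  have hgk : g < k := lt_of_le_of_ne (by simpa using hkg) fun hgk =>
    Finsupp.mem_support_iff.1 hk (hgk ▸ d.apply_firstZero)
  have hkm := hout k hk
  obtain ⟨m, rfl⟩ : ∃ m', m = m' + 1 := ⟨m - 1, by omega⟩
  by_cases hg1 : d (g + 1) = 0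
  · have hrange : ↑d.support ⊆ Set.range (skipTwo g) := fun j hj =>
      mem_range_skipTwo.2 ⟨fun h => Finsupp.mem_support_iff.1 hj (h ▸ d.apply_firstZero),
        fun h => Finsupp.mem_support_iff.1 hj (h ▸ hg1)⟩
    have hgk' : g + 1 < k := lt_of_le_of_ne hgk fun h => Finsupp.mem_support_iff.1 hk (h ▸ hg1)
    rw [← Finsupp.mapDomain_comapDomain _ (skipTwo_injective g) d hrange,
      hex.coeff_mapDomain_skipTwo (by omega)]
    have hfirst : g ≤ (d.comapDomain _ (skipTwo_injective g).injOn).firstZero :=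
      Finsupp.le_firstZero_iff.2 fun j hj => by
        simpa [skipTwo, hj] using Finsupp.apply_ne_zero_of_lt_firstZero hj
    exact ih _ (by omega) m _ rfl
  · refine hex.coeff_eq_zero_of_apply_succ_ne_zero (by omega) hg1 fun u hu hud =>
      ih _ ?_ (m + 1) u rfl
    have := Finsupp.firstZero_lt_of_mapDomain_mergeSucc_eq hu hud
    omega

theorem stmt7_general (n : ℕ) (f : ℕ → MvPolynomial ℕ ℚ)
    (hst : IsStableX f) (hex : SatisfiesEx f)
    (hhom : ∀ m, (f m).IsHomogeneous n)
    (hcoeff : ∀ c : List ℕ, (∀ a ∈ c, 0 < a) → c.sum = n →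
      ∀ m, c.length ≤ 2 * m + 1 →
        coeff (∑ k ∈ Finset.range c.length, Finsupp.single k (c.getD k 0)) (f m) = 0) :
    ∀ m, f m = 0 := by
  intro m
  ext d
  rw [coeff_zero]
  refine hex.coeff_eq_zero hst.1 (fun m d hd hdm => ?_) m d
  exact coeff_eq_zero_of_support_subset_range_firstZero (hhom m)
    (fun c hc hsum hlen => hcoeff c hc hsum m hlen) hd hdm

/-- Let `n ≥ 1` and `f` be a stable x-family satisfying (E_x) with
every `f_{2m+1}` homogeneous of degree `n`.  If for every composition `c` of `n` and
every `m` with `c.length ≤ 2m+1` the coefficient of the packed monomial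
`x₁^{c₁}⋯x_r^{c_r}` in `f_{2m+1}` vanishes, then `f_{2m+1} = 0` for all `m`. -/
theorem stmt7 (n : ℕ) (hn : 1 ≤ n) (f : ℕ → MvPolynomial ℕ ℚ)
    (hst : IsStableX f) (hex : SatisfiesEx f)
    (hhom : ∀ m, (f m).IsHomogeneous n)
    (hcoeff : ∀ c : List ℕ, (∀ a ∈ c, 0 < a) → c.sum = n →
      ∀ m, c.length ≤ 2 * m + 1 →
        coeff (∑ k ∈ Finset.range c.length, Finsupp.single k (c.getD k 0)) (f m) = 0) :
    ∀ m, f m = 0 :=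
  stmt7_general n f hst hex hhom hcoeff
end
end
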